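/- arXiv:0907.1336 — 3 statements merged into one kernel-verified Lean document; each statement's English description precedes it below -/
import Mathlib

section
/- Let k and ℓ be positive integers, let D and F be Young diagrams with r(D) ≤ k and r(F) ≤ k+ℓ, and let P ∈ (ℤ_{≥0})^ℓ. Then the set Ω_{F,D,P} is finite and its cardinality equals Σ K_{F/E,A} · K_{D/E,B}, where the sum is over all Young diagrams E with r(E) ≤ k and all triples (A,B,C) ∈ (ℤ_{≥0})^ℓ × (ℤ_{≥0})^ℓ × (ℤ_{≥0})^{ℓ(ℓ−1)/2} with S(A,B,C) = P. -/
/-!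
Read an element `f` of `Ω(k,ℓ)` row by row. The order relations of `Γ(k,ℓ)` say exactly that
the rows `f_0, f_1, …, f_ℓ` form a chain of interlacing Young diagrams, and so do
`f_0, f_{-1}, …, f_{-ℓ}`; the values on the `ε_{s,t}` are unconstrained. Conversely, two such
chains from a common diagram `E` (with `r(E) ≤ k`) to `F` and to `D`, together with values `C`,
glue to an element of `Ω_{F,D,P}` whenever `S(A,B,C) = P`, where `A` and `B` list the numbers of
boxes added at each step. An interlacing chain from `E` to `F` with step sizes `A` is the same as a
semistandard tableau of shape `F/E` and content `A` (its `i`-th diagram consists of the boxes with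
entries `≤ i`), so the fibre of `f ↦ (E, A, B, C)` has `K_{F/E,A} · K_{D/E,B}` elements.
-/

open MvPolynomial TensorProduct
open scoped Classical

noncomputable section

namespace Pieri

/-! ### Young diagrams and skew Kostka numbers.

A Young diagram is encoded as a finitely supported function `D : ℕ →₀ ℕ`
(0-indexed: `D i` is the length of row `i+1`), weakly decreasing. -/

def IsYoung (D : ℕ →₀ ℕ) : Prop := ∀ i, D (i + 1) ≤ D i

/-- `|D|`, the number of boxes. -/
def ysize (D : ℕ →₀ ℕ) : ℕ := D.sum fun _ e => e

/-- `Interlaces A B` : `A ⊒ B`, i.e. `a_j ≥ b_j ≥ a_{j+1}` for all `j`. -/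
def Interlaces (A B : ℕ →₀ ℕ) : Prop := ∀ j, B j ≤ A j ∧ A (j + 1) ≤ B j

/-- Semistandard skew tableau of shape `F/E` with entries in `{1,…,m}` and content `M`.
The filling `T` is normalized to be `0` outside the boxes of `F/E`. -/
def IsSkewSSYT (E F : ℕ →₀ ℕ) (m : ℕ) (M : Fin m → ℕ) (T : ℕ × ℕ → ℕ) : Prop :=
  (∀ i, E i ≤ F i) ∧
  (∀ i j, E i ≤ j → j < F i → 1 ≤ T (i, j) ∧ T (i, j) ≤ m) ∧
  (∀ i j, ¬(E i ≤ j ∧ j < F i) → T (i, j) = 0) ∧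
  (∀ i j, E i ≤ j → j + 1 < F i → T (i, j) ≤ T (i, j + 1)) ∧
  (∀ i j, E i ≤ j → j < F i → E (i + 1) ≤ j → j < F (i + 1) → T (i, j) < T (i + 1, j)) ∧
  (∀ r : Fin m, Set.ncard {c : ℕ × ℕ | E c.1 ≤ c.2 ∧ c.2 < F c.1 ∧ T c = (r : ℕ) + 1} = M r)

/-- The skew Kostka number `K_{F/E, M}`. -/
def kostka (E F : ℕ →₀ ℕ) (m : ℕ) (M : Fin m → ℕ) : ℕ :=
  Set.ncard {T : ℕ × ℕ → ℕ | IsSkewSSYT E F m M T}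

/-! ### The posets `Γ(k,ℓ)` and `Γ̃(k,ℓ)` and the lattice cone `Ω(k,ℓ)`. -/

/-- Ambient type containing `Γ̃(k,ℓ)`: `Sum.inl (i,j)` encodes `γ_j^(i)`,
`Sum.inr (s,t)` encodes `ε_{s,t}`. -/
abbrev GammaAmb : Type := (ℤ × ℕ) ⊕ (ℕ × ℕ)

def gammaSet (k l : ℕ) : Set (ℤ × ℕ) :=
  {p | -(l : ℤ) ≤ p.1 ∧ p.1 ≤ (l : ℤ) ∧ 1 ≤ p.2 ∧ (p.2 : ℤ) ≤ (k : ℤ) + max 0 p.1}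

def epsSet (l : ℕ) : Set (ℕ × ℕ) := {p | 1 ≤ p.1 ∧ p.1 < p.2 ∧ p.2 ≤ l}

def gammaTildeSet (k l : ℕ) : Set GammaAmb :=
  Sum.inl '' gammaSet k l ∪ Sum.inr '' epsSet l

/-- One-step generating relations of the partial order of `Γ(k,ℓ)`:
`gammaStep k l a b` means "`a ≥ b`" is one of the defining relations. -/
def gammaStep (k l : ℕ) : ℤ × ℕ → ℤ × ℕ → Prop := fun a b =>
  (∃ i j : ℕ, i < l ∧ 1 ≤ j ∧ j ≤ k + i ∧ a = ((i : ℤ) + 1, j) ∧ b = ((i : ℤ), j)) ∨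
  (∃ i j : ℕ, i < l ∧ 1 ≤ j ∧ j ≤ k + i ∧ a = ((i : ℤ), j) ∧ b = ((i : ℤ) + 1, j + 1)) ∨
  (∃ i j : ℕ, i < l ∧ 1 ≤ j ∧ j ≤ k ∧ a = (-(i : ℤ) - 1, j) ∧ b = (-(i : ℤ), j)) ∨
  (∃ i j : ℕ, i < l ∧ 1 ≤ j ∧ j + 1 ≤ k ∧ a = (-(i : ℤ), j) ∧ b = (-(i : ℤ) - 1, j + 1))

/-- `gammaGE k l a b` : `a ≥ b` in the partial order of `Γ(k,ℓ)` generated by the relations. -/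
def gammaGE (k l : ℕ) : ℤ × ℕ → ℤ × ℕ → Prop := Relation.ReflTransGen (gammaStep k l)

/-- `tildeGE k l a b` : `a ≥ b` in `Γ̃(k,ℓ)`; each `ε_{s,t}` is comparable only with itself. -/
def tildeGE (k l : ℕ) : GammaAmb → GammaAmb → Prop := fun a b =>
  (∃ p q, a = Sum.inl p ∧ b = Sum.inl q ∧ gammaGE k l p q) ∨ a = b

/-- `Ω(k,ℓ)`, the additive monoid of order-preserving functions `Γ̃(k,ℓ) → ℤ_{≥0}`,
encoded as functions on the ambient type vanishing outside `Γ̃(k,ℓ)`. -/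
def OmegaM (k l : ℕ) : AddSubmonoid (GammaAmb → ℕ) where
  carrier := {f | (∀ a b, tildeGE k l a b → f b ≤ f a) ∧
    ∀ p, p ∉ gammaTildeSet k l → f p = 0}
  add_mem' := by
    rintro f g ⟨hf1, hf2⟩ ⟨hg1, hg2⟩
    refine ⟨fun a b h => add_le_add (hf1 a b h) (hg1 a b h), fun p hp => ?_⟩
    simp [Pi.add_apply, hf2 p hp, hg2 p hp]
  zero_mem' := ⟨fun _ _ _ => le_rfl, fun _ _ => rfl⟩

def Omega (k l : ℕ) : Set (GammaAmb → ℕ) := OmegaM k l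

/-- `f_{i,j}` as an integer. -/
def fval (f : GammaAmb → ℕ) (i : ℤ) (j : ℕ) : ℤ := (f (Sum.inl (i, j)) : ℤ)

/-- `A_j(f)`. -/
def Afun (k : ℕ) (f : GammaAmb → ℕ) (j : ℕ) : ℤ :=
  (∑ a ∈ Finset.Icc 1 (k + j), fval f (j : ℤ) a)
    - ∑ b ∈ Finset.Icc 1 (k + j - 1), fval f ((j : ℤ) - 1) b

/-- `B_j(f)`. -/
def Bfun (k : ℕ) (f : GammaAmb → ℕ) (j : ℕ) : ℤ :=
  ∑ a ∈ Finset.Icc 1 k, (fval f (-(j : ℤ)) a - fval f (-(j : ℤ) + 1) a)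

/-- `P_j(f)`. -/
def Pfun (k l : ℕ) (f : GammaAmb → ℕ) (j : ℕ) : ℤ :=
  Afun k f j + Bfun k f j + (∑ a ∈ Finset.Ico 1 j, (f (Sum.inr (a, j)) : ℤ))
    + ∑ b ∈ Finset.Icc (j + 1) l, (f (Sum.inr (j, b)) : ℤ)

/-- `Ω_{F,D,P}` : the elements `f ∈ Ω(k,ℓ)` with `f_{-ℓ} = D`, `f_ℓ = F` and `P(f) = P`. -/
def OmegaFDP (k l : ℕ) (D F : ℕ →₀ ℕ) (P : Fin l → ℕ) : Set (GammaAmb → ℕ) :=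
  {f ∈ Omega k l |
    (∀ a : ℕ, 1 ≤ a → a ≤ k → f (Sum.inl (-(l : ℤ), a)) = D (a - 1)) ∧
    (∀ a : ℕ, 1 ≤ a → a ≤ k + l → f (Sum.inl ((l : ℤ), a)) = F (a - 1)) ∧
    (∀ j : Fin l, Pfun k l f ((j : ℕ) + 1) = (P j : ℤ))}

/-- `S(A,B,C)`. -/
def Scomb (l : ℕ) (A B : Fin l → ℕ) (C : ℕ × ℕ → ℕ) : Fin l → ℕ := fun i =>
  A i + B i + (∑ s ∈ Finset.Ico 1 ((i : ℕ) + 1), C (s, (i : ℕ) + 1))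
    + ∑ t ∈ Finset.Icc ((i : ℕ) + 2) l, C ((i : ℕ) + 1, t)

/-! ### Increasing subsets -/

/-- The sequence `a_i` attached to `(c, I, J)`. -/
def aSeq (c : ℕ) (I J : Finset ℕ) (i : ℤ) : ℕ :=
  if 0 ≤ i then c + (J ∩ Finset.Icc 1 i.toNat).card
  else c + (I ∩ Finset.Icc 1 (-i).toNat).card

/-- The increasing subset `A_{(c,I,J)}` of `Γ(k,ℓ)`. -/
def Acij (l c : ℕ) (I J : Finset ℕ) : Set (ℤ × ℕ) :=
  {p | -(l : ℤ) ≤ p.1 ∧ p.1 ≤ (l : ℤ) ∧ 1 ≤ p.2 ∧ p.2 ≤ aSeq c I J p.1}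

/-- The increasing subset `A_{(c,I,J)} ∪ Z` of `Γ̃(k,ℓ)`. -/
def AcijT (l c : ℕ) (I J : Finset ℕ) (Z : Finset (ℕ × ℕ)) : Set GammaAmb :=
  Sum.inl '' Acij l c I J ∪ Sum.inr '' (Z : Set (ℕ × ℕ))

def IsIncreasingG (k l : ℕ) (A : Set (ℤ × ℕ)) : Prop :=
  A ⊆ gammaSet k l ∧ ∀ a ∈ A, ∀ x ∈ gammaSet k l, gammaGE k l x a → x ∈ A

def IsIncreasingT (k l : ℕ) (A : Set GammaAmb) : Prop :=
  A ⊆ gammaTildeSet k l ∧ ∀ a ∈ A, ∀ x ∈ gammaTildeSet k l, tildeGE k l x a → x ∈ A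

/-- Characteristic function `χ_A`. -/
def chiInd (A : Set GammaAmb) : GammaAmb → ℕ := A.indicator fun _ => 1

/-! ### The polynomial algebra `P_{n,k,ℓ}` and the action of `U_n × U_k` -/

/-- Index type for the variables of `P_{n,k,ℓ}` (all indices 0-based):
`inl (i,j) ↦ x_{i+1,j+1}`, `inr (inl (i,j)) ↦ y_{i+1,j+1}`,
`inr (inr (inl (i,j))) ↦ r_{i+1,k+j+1}`, `inr (inr (inr ((s,t),_))) ↦ r_{k+s+1,k+t+1}`. -/
abbrev VarIdx (n k l : ℕ) : Type :=
  (Fin n × Fin k) ⊕ (Fin n × Fin l) ⊕ (Fin k × Fin l) ⊕ {p : Fin l × Fin l // p.1 < p.2}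

abbrev PRing (n k l : ℕ) : Type := MvPolynomial (VarIdx n k l) ℂ

/-- The variable `x_{i,j}` (1-based indices). -/
def xP (n k l : ℕ) (i j : ℕ) : PRing n k l :=
  if h : 1 ≤ i ∧ i ≤ n ∧ 1 ≤ j ∧ j ≤ k then
    X (Sum.inl (⟨i - 1, by omega⟩, ⟨j - 1, by omega⟩)) else 0

/-- The variable `y_{i,j}` (1-based indices). -/
def yP (n k l : ℕ) (i j : ℕ) : PRing n k l :=
  if h : 1 ≤ i ∧ i ≤ n ∧ 1 ≤ j ∧ j ≤ l then
    X (Sum.inr (Sum.inl (⟨i - 1, by omega⟩, ⟨j - 1, by omega⟩))) else 0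

/-- The variable `r_{i,k+j}` (1-based `i ≤ k`, `j ≤ l`). -/
def rP (n k l : ℕ) (i j : ℕ) : PRing n k l :=
  if h : 1 ≤ i ∧ i ≤ k ∧ 1 ≤ j ∧ j ≤ l then
    X (Sum.inr (Sum.inr (Sum.inl (⟨i - 1, by omega⟩, ⟨j - 1, by omega⟩)))) else 0

/-- The variable `r_{k+s,k+t}` (1-based, `1 ≤ s < t ≤ l`). -/
def sP (n k l : ℕ) (s t : ℕ) : PRing n k l :=
  if h : 1 ≤ s ∧ s < t ∧ t ≤ l then
    X (Sum.inr (Sum.inr (Sum.inr ⟨(⟨s - 1, by omega⟩, ⟨t - 1, by omega⟩),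
      by exact Fin.mk_lt_mk.mpr (by omega)⟩))) else 0

/-- Upper triangular unipotent matrices. -/
def IsUU {m : ℕ} (g : Matrix (Fin m) (Fin m) ℂ) : Prop :=
  (∀ i, g i i = 1) ∧ ∀ i j : Fin m, j < i → g i j = 0

/-- The action of a pair of matrices `(g,h)` on `P_{n,k,ℓ}`:
`x_{i,j} ↦ (gᵀXh)_{i,j}`, `y_{i,j} ↦ (gᵀY_j)_i`, `r_{i,k+j} ↦ (hᵀR_j)_i`,
`r_{k+s,k+t} ↦ r_{k+s,k+t}`. -/
def uAct (n k l : ℕ) (g : Matrix (Fin n) (Fin n) ℂ) (h : Matrix (Fin k) (Fin k) ℂ) :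
    PRing n k l →ₐ[ℂ] PRing n k l :=
  aeval fun v => match v with
    | Sum.inl (i, j) => ∑ a : Fin n, ∑ b : Fin k, C (g a i * h b j) * X (Sum.inl (a, b))
    | Sum.inr (Sum.inl (i, j)) => ∑ a : Fin n, C (g a i) * X (Sum.inr (Sum.inl (a, j)))
    | Sum.inr (Sum.inr (Sum.inl (i, j))) =>
        ∑ b : Fin k, C (h b i) * X (Sum.inr (Sum.inr (Sum.inl (b, j))))
    | Sum.inr (Sum.inr (Sum.inr st)) => X (Sum.inr (Sum.inr (Sum.inr st)))

/-- The Pieri algebra `𝔄_{n,k,ℓ} = (P_{n,k,ℓ})^{U_n × U_k}`. -/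
def invariants (n k l : ℕ) : Subalgebra ℂ (PRing n k l) where
  carrier := {f | ∀ g h, IsUU g → IsUU h → uAct n k l g h f = f}
  mul_mem' := by
    intro a b ha hb g h hg hh
    rw [map_mul, ha g h hg hh, hb g h hg hh]
  add_mem' := by
    intro a b ha hb g h hg hh
    rw [map_add, ha g h hg hh, hb g h hg hh]
  one_mem' := fun g h _ _ => map_one _
  zero_mem' := fun g h _ _ => map_zero _
  algebraMap_mem' := fun c g h _ _ => (uAct _ _ _ g h).commutes c

/-! ### The graded lexicographic order -/

/-- Rank of a variable: smaller rank = bigger variable in the order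
`x_{1,1} > x_{2,1} > ⋯ > x_{n,k} > y_{1,1} > ⋯ > y_{n,ℓ} > r_{1,k+1} > ⋯ > r_{k,k+ℓ}
> r_{k+1,k+2} > r_{k+1,k+3} > r_{k+2,k+3} > ⋯ > r_{k+ℓ-1,k+ℓ}`. -/
def vrank (n k l : ℕ) : VarIdx n k l → ℕ
  | Sum.inl (i, j) => j.val * n + i.val
  | Sum.inr (Sum.inl (i, j)) => n * k + j.val * n + i.val
  | Sum.inr (Sum.inr (Sum.inl (i, j))) => n * k + n * l + j.val * k + i.val
  | Sum.inr (Sum.inr (Sum.inr ⟨(s, t), _⟩)) =>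
      n * k + n * l + k * l + t.val * (t.val - 1) / 2 + s.val

/-- Total degree of an exponent vector. -/
def mdeg {n k l : ℕ} (α : VarIdx n k l →₀ ℕ) : ℕ := α.sum fun _ e => e

/-- `grlexLT n k l α β` : the monomial `x^α` is smaller than `x^β` in the graded
lexicographic order. -/
def grlexLT (n k l : ℕ) (α β : VarIdx n k l →₀ ℕ) : Prop :=
  mdeg α < mdeg β ∨ (mdeg α = mdeg β ∧
    ∃ v, α v < β v ∧ ∀ w, vrank n k l w < vrank n k l v → α w = β w)

/-- `IsLeadMon n k l f α` : `x^α` is the leading monomial of `f`. -/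
def IsLeadMon (n k l : ℕ) (f : PRing n k l) (α : VarIdx n k l →₀ ℕ) : Prop :=
  α ∈ f.support ∧ ∀ β ∈ f.support, β ≠ α → grlexLT n k l β α

/-! ### The determinants `η_{(c,I,J)}` -/

/-- The determinant `η_{(c,I,J)}`. -/
def eta (n k l : ℕ) (c : ℕ) (I J : Finset ℕ) : PRing n k l :=
  Matrix.det (Matrix.of fun a b : Fin (c + I.card + J.card) =>
    if a.val < c + J.card then
      if b.val < c + I.card then xP n k l (a.val + 1) (b.val + 1)
      else yP n k l (a.val + 1) ((J.sort (· ≤ ·)).getD (b.val - (c + I.card)) 0)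
    else
      if b.val < c + I.card then
        rP n k l (b.val + 1) ((I.sort (· ≤ ·)).getD (a.val - (c + J.card)) 0)
      else 0)

/-- `η_{χ_B}` for `B = A_{(c,I,J)} ∪ Z`. -/
def etaChi (n k l : ℕ) (c : ℕ) (I J : Finset ℕ) (Z : Finset (ℕ × ℕ)) : PRing n k l :=
  eta n k l c I J * ∏ p ∈ Z, sP n k l p.1 p.2

/-- `IsEtaOf n k l g q` : `q = ∏_j η_{χ_{A_j}}^{c_j}` for some expression
`g = ∑_j c_j χ_{A_j}` with `A_1 ⊆ ⋯ ⊆ A_N` a chain of increasing subsets of `Γ̃(k,ℓ)`. -/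
def IsEtaOf (n k l : ℕ) (g : GammaAmb → ℕ) (q : PRing n k l) : Prop :=
  ∃ (N : ℕ) (co : Fin N → ℕ) (A : Fin N → Set GammaAmb) (fac : Fin N → PRing n k l),
    (∀ j, IsIncreasingT k l (A j)) ∧
    (∀ j j' : Fin N, j ≤ j' → A j ⊆ A j') ∧
    (g = ∑ j : Fin N, co j • chiInd (A j)) ∧
    (∀ j, ∃ (c : ℕ) (I J : Finset ℕ) (Z : Finset (ℕ × ℕ)),
      c ≤ k ∧ I ⊆ Finset.Icc 1 l ∧ J ⊆ Finset.Icc 1 l ∧ I.card ≤ k - c ∧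
      (↑Z : Set (ℕ × ℕ)) ⊆ epsSet l ∧ A j = AcijT l c I J Z ∧
      fac j = etaChi n k l c I J Z) ∧
    q = ∏ j : Fin N, fac j ^ co j

/-- The monomial `m(g)` attached to `g ∈ Ω(k,ℓ)`. -/
def mOf (n k l : ℕ) (g : GammaAmb → ℕ) : PRing n k l :=
  (∏ u ∈ Finset.Icc 1 k, xP n k l u u ^ g (Sum.inl ((0 : ℤ), u)))
  * (∏ b ∈ Finset.Icc 1 l, ∏ a ∈ Finset.Icc 1 (k + b),
      yP n k l a b ^ (g (Sum.inl ((b : ℤ), a)) - g (Sum.inl ((b : ℤ) - 1, a))))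
  * (∏ j ∈ Finset.Icc 1 l, ∏ i ∈ Finset.Icc 1 k,
      rP n k l i j ^ (g (Sum.inl (-(j : ℤ), i)) - g (Sum.inl (-(j : ℤ) + 1, i))))
  * (∏ t ∈ Finset.Icc 1 l, ∏ s ∈ Finset.Ico 1 t, sP n k l s t ^ g (Sum.inr (s, t)))

/-! ### The homogeneous components `E_{F,D,P}` -/

/-- `f` is homogeneous of degree `d` in the set `S` of variables. -/
def HomogOn (n k l : ℕ) (f : PRing n k l) (S : Set (VarIdx n k l)) (d : ℕ) : Prop :=
  ∀ α ∈ f.support, (∑ v ∈ α.support, S.indicator (fun w => α w) v) = d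

/-- The variables `x_{i,1},…,x_{i,k}, y_{i,1},…,y_{i,ℓ}` (1-based `i`). -/
def rowSet (n k l : ℕ) (i : ℕ) : Set (VarIdx n k l) :=
  {v | match v with
    | Sum.inl (a, _) => (a : ℕ) + 1 = i
    | Sum.inr (Sum.inl (a, _)) => (a : ℕ) + 1 = i
    | _ => False}

/-- The variables `x_{1,j},…,x_{n,j}, r_{j,k+1},…,r_{j,k+ℓ}` (1-based `j`). -/
def colSet (n k l : ℕ) (j : ℕ) : Set (VarIdx n k l) :=
  {v | match v with
    | Sum.inl (_, b) => (b : ℕ) + 1 = j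
    | Sum.inr (Sum.inr (Sum.inl (b, _))) => (b : ℕ) + 1 = j
    | _ => False}

/-- The variables `y_{1,t},…,y_{n,t}, r_{1,k+t},…,r_{k,k+t}`, `r_{k+s,k+t} (s<t)`,
`r_{k+t,k+t'} (t<t')` (1-based `t`). -/
def tSet (n k l : ℕ) (t : ℕ) : Set (VarIdx n k l) :=
  {v | match v with
    | Sum.inr (Sum.inl (_, b)) => (b : ℕ) + 1 = t
    | Sum.inr (Sum.inr (Sum.inl (_, b))) => (b : ℕ) + 1 = t
    | Sum.inr (Sum.inr (Sum.inr ⟨(s, u), _⟩)) => (s : ℕ) + 1 = t ∨ (u : ℕ) + 1 = t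
    | _ => False}

theorem homogOn_add {n k l : ℕ} {f g : PRing n k l} {S : Set (VarIdx n k l)} {d : ℕ}
    (hf : HomogOn n k l f S d) (hg : HomogOn n k l g S d) : HomogOn n k l (f + g) S d := by
  intro α hα
  by_cases h : α ∈ f.support
  · exact hf α h
  · refine hg α ?_
    by_contra hg'
    refine MvPolynomial.mem_support_iff.mp hα ?_
    rw [MvPolynomial.coeff_add, MvPolynomial.notMem_support_iff.mp h,
      MvPolynomial.notMem_support_iff.mp hg', add_zero]

/-- The homogeneous component `E_{F,D,P}` of `𝔄_{n,k,ℓ}`. -/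
def Esub (n k l : ℕ) (F D : ℕ →₀ ℕ) (Pv : Fin l → ℕ) : Submodule ℂ (PRing n k l) where
  carrier := {f | f ∈ invariants n k l ∧
    (∀ i : ℕ, 1 ≤ i → i ≤ n → HomogOn n k l f (rowSet n k l i) (F (i - 1))) ∧
    (∀ j : ℕ, 1 ≤ j → j ≤ k → HomogOn n k l f (colSet n k l j) (D (j - 1))) ∧
    (∀ t : Fin l, HomogOn n k l f (tSet n k l ((t : ℕ) + 1)) (Pv t))}
  add_mem' := by
    rintro f g ⟨hf0, hf1, hf2, hf3⟩ ⟨hg0, hg1, hg2, hg3⟩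
    exact ⟨add_mem hf0 hg0,
      fun i h1 h2 => homogOn_add (hf1 i h1 h2) (hg1 i h1 h2),
      fun j h1 h2 => homogOn_add (hf2 j h1 h2) (hg2 j h1 h2),
      fun t => homogOn_add (hf3 t) (hg3 t)⟩
  zero_mem' := by
    refine ⟨zero_mem _, fun i _ _ α hα => ?_, fun j _ _ α hα => ?_, fun t α hα => ?_⟩ <;>
      simp at hα
  smul_mem' := by
    rintro c f ⟨hf0, hf1, hf2, hf3⟩
    refine ⟨(invariants n k l).smul_mem hf0 c,
      fun i h1 h2 α hα => hf1 i h1 h2 α (MvPolynomial.support_smul hα),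
      fun j h1 h2 α hα => hf2 j h1 h2 α (MvPolynomial.support_smul hα),
      fun t α hα => hf3 t α (MvPolynomial.support_smul hα)⟩

/-- The set of leading monomials of nonzero elements of `𝔄_{n,k,ℓ}`
(as monic monomial polynomials). -/
def LMset (n k l : ℕ) : Set (PRing n k l) :=
  {m | ∃ f ∈ invariants n k l, ∃ α, IsLeadMon n k l f α ∧
    m = MvPolynomial.monomial α (1 : ℂ)}


/-! ### Block for Statement 1 : the quotient `𝒫(M_{n,k+ℓ})/J` -/

abbrev QRing (n m : ℕ) : Type := MvPolynomial (Fin n × Fin m) ℂ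

/-- `r_{i,j} = ∑_{a=1}^n x_{a,i} x_{n-a+1,j}`. -/
def rQ (n m : ℕ) (i j : Fin m) : QRing n m := ∑ a : Fin n, X (a, i) * X (a.rev, j)

/-- The ideal `J` generated by `{r_{i,j} : 1 ≤ i,j ≤ k} ∪ {r_{k+j,k+j} : 1 ≤ j ≤ ℓ}`. -/
def JId (n k l : ℕ) : Ideal (QRing n (k + l)) :=
  Ideal.span ({p | ∃ i j : Fin (k + l), (i : ℕ) < k ∧ (j : ℕ) < k ∧ p = rQ n (k + l) i j} ∪
    {p | ∃ j : Fin (k + l), k ≤ (j : ℕ) ∧ p = rQ n (k + l) j j})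

/-- The substitution `x_{i,j} ↦ (g⁻¹ X h)_{i,j}` on `𝒫(M_{n,m})`. -/
def actQ (n m : ℕ) (g : Matrix (Fin n) (Fin n) ℂ) (h : Matrix (Fin m) (Fin m) ℂ) :
    QRing n m →ₐ[ℂ] QRing n m :=
  aeval fun p => ∑ a : Fin n, ∑ b : Fin m, C (g⁻¹ p.1 a * h b p.2) * X (a, b)

/-- The matrix of the symmetric bilinear form `⟨u,v⟩ = ∑ u_a v_{n-a+1}`. -/
def flipMat (n : ℕ) : Matrix (Fin n) (Fin n) ℂ := fun i j => if j = i.rev then 1 else 0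

/-- `g ∈ SO_n` : `g` preserves the form and has determinant 1. -/
def IsSO (n : ℕ) (g : Matrix (Fin n) (Fin n) ℂ) : Prop :=
  g.transpose * flipMat n * g = flipMat n ∧ g.det = 1

/-- `diag(h, 1_ℓ)`, the embedding of `GL_k` into `GL_{k+ℓ}`. -/
def embedU (k l : ℕ) (h : Matrix (Fin k) (Fin k) ℂ) : Matrix (Fin (k + l)) (Fin (k + l)) ℂ :=
  fun i j =>
    if hij : (i : ℕ) < k ∧ (j : ℕ) < k then h ⟨i.val, hij.1⟩ ⟨j.val, hij.2⟩
    else if i = j then 1 else 0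

/-- The invariants `(𝒫(M_{n,k+ℓ})/J)^{U_{SO_n} × U_k}` (invariance tested on every
representative). -/
def SqSet (n k l : ℕ) : Set (QRing n (k + l) ⧸ JId n k l) :=
  {q | ∀ (g : Matrix (Fin n) (Fin n) ℂ) (h : Matrix (Fin k) (Fin k) ℂ),
      IsUU g → IsSO n g → IsUU h →
      ∀ f : QRing n (k + l), Ideal.Quotient.mk (JId n k l) f = q →
        Ideal.Quotient.mk (JId n k l) (actQ n (k + l) g (embedU k l h) f) = q}

/-! ### Block for Statement 16 : the `Sp_{2n}` Pieri algebra -/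

abbrev QSp (n k : ℕ) : Type := MvPolynomial (Fin (2 * n) × Fin k) ℂ
abbrev YRing (n l : ℕ) : Type := MvPolynomial (Fin (2 * n) × Fin l) ℂ

/-- The matrix of the symplectic form `(u,v) = ∑_{a=1}^n (u_a v_{2n+1-a} - u_{2n+1-a} v_a)`. -/
def symplMat (n : ℕ) : Matrix (Fin (2 * n)) (Fin (2 * n)) ℂ :=
  fun i j => if j = i.rev then (if (i : ℕ) < n then 1 else -1) else 0

def IsSp (n : ℕ) (g : Matrix (Fin (2 * n)) (Fin (2 * n)) ℂ) : Prop :=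
  g.transpose * symplMat n * g = symplMat n

/-- The substitution `x_{i,j} ↦ (gᵀ T h)_{i,j}` on `𝒫(M_{2n,k})`. -/
def actSp (n k : ℕ) (g : Matrix (Fin (2 * n)) (Fin (2 * n)) ℂ)
    (h : Matrix (Fin k) (Fin k) ℂ) : QSp n k →ₐ[ℂ] QSp n k :=
  aeval fun p => ∑ a : Fin (2 * n), ∑ b : Fin k, C (g a p.1 * h b p.2) * X (a, b)

/-- The substitution `y_{i,j} ↦ (gᵀ Y_j)_i` on `𝒫(ℂ_1^{2n}) ⊗ ⋯ ⊗ 𝒫(ℂ_ℓ^{2n})`. -/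
def actY (n l : ℕ) (g : Matrix (Fin (2 * n)) (Fin (2 * n)) ℂ) : YRing n l →ₐ[ℂ] YRing n l :=
  aeval fun p => ∑ a : Fin (2 * n), C (g a p.1) * X (a, p.2)

/-- The ideal `I_{2n,k}` generated by all `Sp_{2n}`-invariants with zero constant term. -/
def ISp (n k : ℕ) : Ideal (QSp n k) :=
  Ideal.span {f | (∀ g, IsSp n g → actSp n k g 1 f = f) ∧ MvPolynomial.constantCoeff f = 0}

/-- The canonical surjection `𝒫(M_{2n,k}) ⊗ 𝒫(ℂ^{2n})^{⊗ℓ} → (𝒫(M_{2n,k})/I_{2n,k}) ⊗ ⋯`. -/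
def PsiSp (n k l : ℕ) : (QSp n k ⊗[ℂ] YRing n l) →ₐ[ℂ] ((QSp n k ⧸ ISp n k) ⊗[ℂ] YRing n l) :=
  Algebra.TensorProduct.map (Ideal.Quotient.mkₐ ℂ (ISp n k)) (AlgHom.id ℂ (YRing n l))

/-- The `Sp_{2n}` Pieri algebra `𝒜_{n,k,ℓ}`, as the set of elements of
`(𝒫(M_{2n,k})/I_{2n,k}) ⊗ 𝒫(ℂ_1^{2n}) ⊗ ⋯ ⊗ 𝒫(ℂ_ℓ^{2n})` fixed by `U_{Sp_{2n}} × U_k`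
(invariance tested on every representative). -/
def ASpSet (n k l : ℕ) : Set ((QSp n k ⧸ ISp n k) ⊗[ℂ] YRing n l) :=
  {t | ∀ (g : Matrix (Fin (2 * n)) (Fin (2 * n)) ℂ) (h : Matrix (Fin k) (Fin k) ℂ),
      IsSp n g → IsUU g → IsUU h →
      ∀ w : QSp n k ⊗[ℂ] YRing n l, PsiSp n k l w = t →
        PsiSp n k l (Algebra.TensorProduct.map (actSp n k g h) (actY n l g) w) = t}


/-! ### Block for Statement 15 : flat families -/

/-- A flat `ℂ[t]`-algebra with general fibre `𝔄_{n,k,ℓ}` and special fibre `ℂ[Ω(k,ℓ)]`. -/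
structure FlatFam (n k l : ℕ) : Type 1 where
  R : Type
  [cr : CommRing R]
  [algC : Algebra ℂ R]
  [algP : Algebra (Polynomial ℂ) R]
  [tower : IsScalarTower ℂ (Polynomial ℂ) R]
  flat : Module.Flat (Polynomial ℂ) R
  general : ∀ a : ℂ, a ≠ 0 →
    Nonempty ((R ⧸ Ideal.span {algebraMap (Polynomial ℂ) R (Polynomial.X - Polynomial.C a)})
      ≃ₐ[ℂ] invariants n k l)
  special : Nonempty ((R ⧸ Ideal.span {algebraMap (Polynomial ℂ) R Polynomial.X})
      ≃ₐ[ℂ] AddMonoidAlgebra ℂ (OmegaM k l))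

/-! ### Block for Statement 17 : the real cone -/

/-- The elements of `Γ̃(k,ℓ)` as a subtype. -/
abbrev GTElt (k l : ℕ) : Type := ↥(gammaTildeSet k l)

/-- Extension by zero of a function on `Γ̃(k,ℓ)` to the ambient type. -/
def extZ (k l : ℕ) (f : GTElt k l → ℝ) : GammaAmb → ℝ :=
  fun p => if h : p ∈ gammaTildeSet k l then f ⟨p, h⟩ else 0

/-- `P_j(f)` for a real-valued function `f`. -/
def PfunR (k l : ℕ) (f : GammaAmb → ℝ) (j : ℕ) : ℝ :=
  ((∑ a ∈ Finset.Icc 1 (k + j), f (Sum.inl ((j : ℤ), a)))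
      - ∑ b ∈ Finset.Icc 1 (k + j - 1), f (Sum.inl ((j : ℤ) - 1, b)))
    + (∑ a ∈ Finset.Icc 1 k, (f (Sum.inl (-(j : ℤ), a)) - f (Sum.inl (-(j : ℤ) + 1, a))))
    + (∑ a ∈ Finset.Ico 1 j, f (Sum.inr (a, j)))
    + ∑ b ∈ Finset.Icc (j + 1) l, f (Sum.inr (j, b))

/-- The set `𝒞_{F,D,P}` of nonnegative order-preserving real functions on `Γ̃(k,ℓ)`
with `f_{-ℓ} = D`, `f_ℓ = F` and `P(f) = P`. -/
def CsetFDP (k l : ℕ) (D F : ℕ →₀ ℕ) (P : Fin l → ℕ) : Set (GTElt k l → ℝ) :=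
  {f | (∀ a b : GammaAmb, tildeGE k l a b → extZ k l f b ≤ extZ k l f a) ∧
    (∀ p, 0 ≤ f p) ∧
    (∀ a : ℕ, 1 ≤ a → a ≤ k → extZ k l f (Sum.inl (-(l : ℤ), a)) = (D (a - 1) : ℝ)) ∧
    (∀ a : ℕ, 1 ≤ a → a ≤ k + l → extZ k l f (Sum.inl ((l : ℤ), a)) = (F (a - 1) : ℝ)) ∧
    (∀ j : Fin l, PfunR k l (extZ k l f) ((j : ℕ) + 1) = (P j : ℝ))}

section Prelim

theorem ysize_eq_sum {D : ℕ →₀ ℕ} {s : Finset ℕ} (h : D.support ⊆ s) :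
    ysize D = ∑ a ∈ s, D a :=
  Finsupp.sum_of_support_subset D h _ fun _ _ => rfl

theorem ysize_mono {D D' : ℕ →₀ ℕ} (h : D ≤ D') : ysize D ≤ ysize D' :=
  Finsupp.degree_mono h

theorem apply_le_ysize (D : ℕ →₀ ℕ) (a : ℕ) : D a ≤ ysize D :=
  Finsupp.le_degree a D

theorem mem_filter_Ico_iff_lt_add_card {p : ℕ → Prop} [DecidablePred p] {a b : ℕ}
    (hp : ∀ x y, a ≤ x → x ≤ y → y < b → p y → p x) (x : ℕ) :
    x ∈ (Finset.Ico a b).filter p ↔ a ≤ x ∧ x < a + ((Finset.Ico a b).filter p).card := by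
  constructor
  · rintro hx
    rw [Finset.mem_filter, Finset.mem_Ico] at hx
    have hsub : Finset.Ico a (x + 1) ⊆ (Finset.Ico a b).filter p := by
      intro y hy
      rw [Finset.mem_Ico] at hy
      exact Finset.mem_filter.mpr
        ⟨Finset.mem_Ico.mpr ⟨hy.1, by omega⟩, hp y x hy.1 (by omega) hx.1.2 hx.2⟩
    have := Finset.card_le_card hsub
    rw [Nat.card_Ico] at this
    omega
  · rintro ⟨h1, h2⟩
    by_contra hx
    have hsub : (Finset.Ico a b).filter p ⊆ Finset.Ico a x := by
      intro y hy
      rw [Finset.mem_filter, Finset.mem_Ico] at hy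
      refine Finset.mem_Ico.mpr ⟨hy.1.1, ?_⟩
      by_contra hyx
      exact hx (Finset.mem_filter.mpr
        ⟨Finset.mem_Ico.mpr ⟨h1, by omega⟩, hp x y h1 (by omega) hy.1.2 hy.2⟩)
    have := Finset.card_le_card hsub
    rw [Nat.card_Ico] at this
    omega

theorem ncard_eq_sum_card_of_mem_iff {α β : Type*} {S : Set (α × β)} (s : Finset α)
    (t : α → Finset β) (hS : ∀ a b, (a, b) ∈ S ↔ a ∈ s ∧ b ∈ t a) :
    S.ncard = ∑ a ∈ s, (t a).card := by
  have hS' : S = ↑((s.sigma t).map (Equiv.sigmaEquivProd α β).toEmbedding) := by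
    ext ⟨a, b⟩
    simp [hS]
  rw [← Finset.card_sigma, hS', Set.ncard_coe_finset, Finset.card_map]

theorem le_of_forall_lt_imp {e f x y : ℕ} (hx : x ≤ f) (hy : e ≤ y)
    (h : ∀ j, e ≤ j → j < f → j < x → j < y) : x ≤ y := by
  by_contra! hlt
  exact lt_irrefl y (h y hy (by omega) hlt)

theorem eq_of_forall_lt_iff {e f x y : ℕ} (hx : e ≤ x ∧ x ≤ f) (hy : e ≤ y ∧ y ≤ f)
    (h : ∀ j, e ≤ j → j < f → (j < x ↔ j < y)) : x = y :=
  le_antisymm (le_of_forall_lt_imp hx.2 hy.1 fun j h1 h2 => (h j h1 h2).mp)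
    (le_of_forall_lt_imp hy.2 hx.1 fun j h1 h2 => (h j h1 h2).mpr)

end Prelim

section Chains

/-- The rows of a skew tableau of shape `F/E` and content `M`: `g i` is the shape filled by
the entries `≤ i`, so each step is a horizontal strip of `M i` boxes. -/
structure IsInterlacingChain (E F : ℕ →₀ ℕ) (m : ℕ) (M : Fin m → ℕ) (g : ℕ → ℕ →₀ ℕ) :
    Prop where
  zero : g 0 = E
  eq_of_le : ∀ i, m ≤ i → g i = F
  le_succ : ∀ i < m, ∀ j, g i j ≤ g (i + 1) j
  succ_succ_le : ∀ i < m, ∀ j, g (i + 1) (j + 1) ≤ g i j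
  ysize_succ : ∀ i : Fin m, ysize (g (i + 1)) = ysize (g i) + M i

variable {E F : ℕ →₀ ℕ} {m : ℕ} {M : Fin m → ℕ} {g : ℕ → ℕ →₀ ℕ} {T : ℕ × ℕ → ℕ}

namespace IsInterlacingChain

variable (hg : IsInterlacingChain E F m M g)
include hg

theorem mono {i i' : ℕ} (h : i ≤ i') (j : ℕ) : g i j ≤ g i' j := by
  induction i', h using Nat.le_induction with
  | base => exact le_rfl
  | succ n _ ih =>
    rcases Nat.lt_or_ge n m with hn | hn
    · exact ih.trans (hg.le_succ n hn j)
    · rw [hg.eq_of_le (n + 1) (by omega), ← hg.eq_of_le n hn]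
      exact ih

theorem le_target (i j : ℕ) : g i j ≤ F j := by
  simpa only [hg.eq_of_le _ (le_max_right i m)] using hg.mono (le_max_left i m) j

theorem source_le (i j : ℕ) : E j ≤ g i j := by
  simpa only [hg.zero] using hg.mono (Nat.zero_le i) j

theorem apply_eq_zero {k : ℕ} (hE : ∀ j, k ≤ j → E j = 0) (hF : ∀ j, k + m ≤ j → F j = 0) :
    ∀ i a, k + min i m ≤ a → g i a = 0 := by
  intro i
  induction i with
  | zero => simpa [hg.zero] using hE
  | succ n ih =>
    intro a ha
    rcases Nat.lt_or_ge n m with hn | hn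
    · have hstep := hg.succ_succ_le n hn (a - 1)
      rw [show a - 1 + 1 = a by omega] at hstep
      have := ih (a - 1) (by omega)
      omega
    · rw [hg.eq_of_le (n + 1) (by omega)]
      exact hF a (by omega)

theorem apply_min (i : ℕ) : g (min i m) = g i := by
  rcases le_total i m with h | h
  · rw [min_eq_left h]
  · rw [min_eq_right h, hg.eq_of_le m le_rfl, hg.eq_of_le i h]

theorem le_iff_lt_card {a j r : ℕ} (hj : j < F a) (hr : r ≤ m) :
    g r a ≤ j ↔ r < ((Finset.range m).filter fun r => g r a ≤ j).card := by
  have hcard : ((Finset.range m).filter fun r => g r a ≤ j).card ≤ m :=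
    (Finset.card_filter_le _ _).trans (Finset.card_range m).le
  rcases hr.eq_or_lt with rfl | hrm
  · rw [hg.eq_of_le r le_rfl]
    omega
  · have key := mem_filter_Ico_iff_lt_add_card (p := fun r => g r a ≤ j) (a := 0) (b := m)
      (fun x y _ hxy _ hy => (hg.mono hxy a).trans hy) r
    rw [← Finset.range_eq_Ico, Finset.mem_filter, Finset.mem_range] at key
    constructor
    · intro h
      have := key.mp ⟨hrm, h⟩
      omega
    · intro h
      exact (key.mpr ⟨r.zero_le, by omega⟩).2

end IsInterlacingChain

/-- The entry of a box of `F/E` is the first index of the chain whose shape contains it. -/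
def tableauOfChain (E F : ℕ →₀ ℕ) (m : ℕ) (g : ℕ → ℕ →₀ ℕ) : ℕ × ℕ → ℕ := fun c =>
  if E c.1 ≤ c.2 ∧ c.2 < F c.1 then ((Finset.range m).filter fun r => g r c.1 ≤ c.2).card
  else 0

theorem tableauOfChain_le_iff (hg : IsInterlacingChain E F m M g) {a j i : ℕ}
    (hbox : E a ≤ j ∧ j < F a) (hi : i ≤ m) :
    tableauOfChain E F m g (a, j) ≤ i ↔ j < g i a := by
  rw [tableauOfChain, if_pos hbox, ← not_lt, ← hg.le_iff_lt_card hbox.2 hi, not_le]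

theorem tableauOfChain_le {a j : ℕ} (hbox : E a ≤ j ∧ j < F a) :
    tableauOfChain E F m g (a, j) ≤ m := by
  rw [tableauOfChain, if_pos hbox]
  exact (Finset.card_filter_le _ _).trans (Finset.card_range m).le

theorem tableauOfChain_eq_succ_iff (hg : IsInterlacingChain E F m M g) {a j i : ℕ}
    (hi : i < m) :
    (E a ≤ j ∧ j < F a ∧ tableauOfChain E F m g (a, j) = i + 1) ↔
      a ∈ F.support ∧ j ∈ Finset.Ico (g i a) (g (i + 1) a) := by
  rw [Finset.mem_Ico, Finsupp.mem_support_iff]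
  constructor
  · rintro ⟨h1, h2, h3⟩
    have hi1 := (tableauOfChain_le_iff hg ⟨h1, h2⟩ hi.le).not
    have hi2 := tableauOfChain_le_iff hg ⟨h1, h2⟩ (show i + 1 ≤ m by omega)
    refine ⟨?_, ?_, ?_⟩ <;> omega
  · rintro ⟨-, h1, h2⟩
    have hbox : E a ≤ j ∧ j < F a :=
      ⟨(hg.source_le i a).trans h1, h2.trans_le (hg.le_target _ a)⟩
    have hi1 := (tableauOfChain_le_iff hg hbox hi.le).not
    have hi2 := tableauOfChain_le_iff hg hbox (show i + 1 ≤ m by omega)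
    refine ⟨hbox.1, hbox.2, ?_⟩
    omega

theorem isSkewSSYT_tableauOfChain (hg : IsInterlacingChain E F m M g) :
    IsSkewSSYT E F m M (tableauOfChain E F m g) := by
  refine ⟨fun a => hg.zero ▸ hg.le_target 0 a, ?_, ?_, ?_, ?_, ?_⟩
  · intro a j h1 h2
    have h0 := (tableauOfChain_le_iff hg ⟨h1, h2⟩ (Nat.zero_le m)).not
    rw [hg.zero] at h0
    exact ⟨by omega, tableauOfChain_le ⟨h1, h2⟩⟩
  · intro a j hbox
    rw [tableauOfChain, if_neg hbox]
  · intro a j h1 h2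
    have hbox : E a ≤ j + 1 ∧ j + 1 < F a := ⟨by omega, h2⟩
    have hj := (tableauOfChain_le_iff hg hbox (tableauOfChain_le hbox)).mp le_rfl
    exact (tableauOfChain_le_iff hg ⟨h1, by omega⟩ (tableauOfChain_le hbox)).mpr (by omega)
  · intro a j h1 h2 h3 h4
    set i := tableauOfChain E F m g (a + 1, j)
    have him : i ≤ m := tableauOfChain_le ⟨h3, h4⟩
    have hj : j < g i (a + 1) := (tableauOfChain_le_iff hg ⟨h3, h4⟩ him).mp le_rfl
    have hi : 1 ≤ i := by
      by_contra h0
      rw [show i = 0 by omega, hg.zero] at hj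
      omega
    have hstep := hg.succ_succ_le (i - 1) (by omega) a
    rw [Nat.sub_add_cancel hi] at hstep
    have := (tableauOfChain_le_iff hg ⟨h1, h2⟩ (by omega : i - 1 ≤ m)).mpr (by omega)
    omega
  · intro i
    rw [ncard_eq_sum_card_of_mem_iff F.support _
        (fun a j => tableauOfChain_eq_succ_iff (a := a) (j := j) hg i.isLt)]
    simp only [Nat.card_Ico]
    rw [Finset.sum_tsub_distrib _ (fun a _ => hg.le_succ i i.isLt a)]
    have hsub : ∀ r, (g r).support ⊆ F.support := fun r a ha => by
      rw [Finsupp.mem_support_iff] at ha ⊢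
      have := hg.le_target r a
      omega
    rw [← ysize_eq_sum (hsub _), ← ysize_eq_sum (hsub _), hg.ysize_succ i]
    omega

def chainOfTableau (E F : ℕ →₀ ℕ) (T : ℕ × ℕ → ℕ) (i : ℕ) : ℕ →₀ ℕ :=
  Finsupp.onFinset (E.support ∪ F.support)
    (fun a => E a + ((Finset.Ico (E a) (F a)).filter fun j => T (a, j) ≤ i).card)
    (by
      intro a ha
      by_contra hmem
      simp only [Finset.mem_union, Finsupp.mem_support_iff, not_or, not_not] at hmem
      simp [hmem.1, hmem.2] at ha)

theorem chainOfTableau_apply (i a : ℕ) : chainOfTableau E F T i a =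
    E a + ((Finset.Ico (E a) (F a)).filter fun j => T (a, j) ≤ i).card := rfl

theorem chainOfTableau_mem_Icc {a : ℕ} (hEF : E a ≤ F a) (i : ℕ) :
    E a ≤ chainOfTableau E F T i a ∧ chainOfTableau E F T i a ≤ F a := by
  have := (Finset.card_filter_le (Finset.Ico (E a) (F a)) fun j => T (a, j) ≤ i).trans
    (Nat.card_Ico (E a) (F a)).le
  rw [chainOfTableau_apply]
  omega

theorem IsSkewSSYT.row_mono (hT : IsSkewSSYT E F m M T) {a x y : ℕ} (h1 : E a ≤ x)
    (h2 : x ≤ y) (h3 : y < F a) : T (a, x) ≤ T (a, y) := by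
  induction y, h2 using Nat.le_induction with
  | base => exact le_rfl
  | succ n hn ih => exact (ih (by omega)).trans (hT.2.2.2.1 a n (h1.trans hn) h3)

theorem lt_chainOfTableau_iff (hT : IsSkewSSYT E F m M T) {a j i : ℕ}
    (hbox : E a ≤ j ∧ j < F a) : j < chainOfTableau E F T i a ↔ T (a, j) ≤ i := by
  have key := mem_filter_Ico_iff_lt_add_card (p := fun j => T (a, j) ≤ i) (a := E a) (b := F a)
    (fun x y hx hxy hy hpy => (hT.row_mono hx hxy hy).trans hpy) j
  rw [Finset.mem_filter, Finset.mem_Ico] at key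
  rw [chainOfTableau_apply]
  exact ⟨fun h => (key.mpr ⟨hbox.1, h⟩).2, fun h => (key.mp ⟨hbox, h⟩).2⟩

theorem ysize_chainOfTableau_succ (hT : IsSkewSSYT E F m M T) (i : Fin m) :
    ysize (chainOfTableau E F T (i + 1)) = ysize (chainOfTableau E F T i) + M i := by
  have hsplit : ∀ a, chainOfTableau E F T (i + 1) a = chainOfTableau E F T i a +
      ((Finset.Ico (E a) (F a)).filter fun j => T (a, j) = i + 1).card := by
    intro a
    simp only [chainOfTableau_apply]
    rw [add_assoc, ← Finset.card_union_of_disjoint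
      (Finset.disjoint_filter.mpr fun _ _ h => by omega), ← Finset.filter_or]
    congr 2
    exact Finset.filter_congr fun j _ => by omega
  have hsupp : ∀ r, (chainOfTableau E F T r).support ⊆ E.support ∪ F.support :=
    fun r => Finsupp.support_onFinset_subset
  have hcount := hT.2.2.2.2.2 i
  rw [ncard_eq_sum_card_of_mem_iff (E.support ∪ F.support)
    (fun a => (Finset.Ico (E a) (F a)).filter fun j => T (a, j) = i + 1)] at hcount
  · rw [ysize_eq_sum (hsupp _), ysize_eq_sum (hsupp _), ← hcount, ← Finset.sum_add_distrib]
    exact Finset.sum_congr rfl fun a _ => hsplit a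
  · intro a j
    simp only [Set.mem_ofPred_eq, Finset.mem_union, Finsupp.mem_support_iff,
      Finset.mem_filter, Finset.mem_Ico]
    omega

theorem isInterlacingChain_chainOfTableau (hE : IsYoung E) (hF : IsYoung F)
    (hT : IsSkewSSYT E F m M T) : IsInterlacingChain E F m M (chainOfTableau E F T) := by
  have hchar : ∀ {a j i : ℕ}, E a ≤ j ∧ j < F a →
      (j < chainOfTableau E F T i a ↔ T (a, j) ≤ i) := lt_chainOfTableau_iff hT
  obtain ⟨hEF, hrange, -, -, hcol, -⟩ := id hT
  refine ⟨?_, ?_, ?_, ?_, ysize_chainOfTableau_succ hT⟩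
  · ext a
    refine eq_of_forall_lt_iff (chainOfTableau_mem_Icc (hEF a) 0) ⟨le_rfl, hEF a⟩ ?_
    intro j h1 h2
    have := (hrange a j h1 h2).1
    rw [hchar ⟨h1, h2⟩]
    omega
  · intro i hi
    ext a
    refine eq_of_forall_lt_iff (chainOfTableau_mem_Icc (hEF a) i) ⟨hEF a, le_rfl⟩ ?_
    intro j h1 h2
    have := (hrange a j h1 h2).2
    rw [hchar ⟨h1, h2⟩]
    omega
  · intro i _ a
    refine le_of_forall_lt_imp (chainOfTableau_mem_Icc (hEF a) i).2
      (chainOfTableau_mem_Icc (hEF a) (i + 1)).1 fun j h1 h2 hj => ?_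
    rw [hchar ⟨h1, h2⟩] at hj ⊢
    omega
  · intro i _ a
    refine le_of_forall_lt_imp (chainOfTableau_mem_Icc (hEF (a + 1)) (i + 1)).2
      ((hE a).trans (chainOfTableau_mem_Icc (hEF a) i).1) fun j h1 h2 hj => ?_
    -- column strictness: the box above a box with entry `≤ i + 1` has entry `≤ i`
    rcases Nat.lt_or_ge j (E a) with hjE | hjE
    · exact hjE.trans_le (chainOfTableau_mem_Icc (hEF a) i).1
    · have hjF : j < F a := h2.trans_le (hF a)
      rw [hchar ⟨h1, h2⟩] at hj
      rw [hchar ⟨hjE, hjF⟩]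
      have := hcol a j hjE hjF h1 h2
      omega

theorem chainOfTableau_tableauOfChain (hg : IsInterlacingChain E F m M g) :
    chainOfTableau E F (tableauOfChain E F m g) = g := by
  have hT := isSkewSSYT_tableauOfChain hg
  funext i
  ext a
  have hEF := hT.1 a
  refine eq_of_forall_lt_iff (chainOfTableau_mem_Icc hEF i)
    ⟨hg.source_le i a, hg.le_target i a⟩ fun j h1 h2 => ?_
  rw [lt_chainOfTableau_iff hT ⟨h1, h2⟩, ← hg.apply_min,
    ← tableauOfChain_le_iff hg ⟨h1, h2⟩ (min_le_right i m)]
  have := tableauOfChain_le (g := g) (m := m) ⟨h1, h2⟩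
  omega

theorem tableauOfChain_chainOfTableau (hE : IsYoung E) (hF : IsYoung F)
    (hT : IsSkewSSYT E F m M T) : tableauOfChain E F m (chainOfTableau E F T) = T := by
  have hg := isInterlacingChain_chainOfTableau hE hF hT
  funext ⟨a, j⟩
  by_cases hbox : E a ≤ j ∧ j < F a
  · have hchar : ∀ i ≤ m, tableauOfChain E F m (chainOfTableau E F T) (a, j) ≤ i ↔
        T (a, j) ≤ i := fun i hi => by
      rw [tableauOfChain_le_iff hg hbox hi, lt_chainOfTableau_iff hT hbox]
    have h1 := tableauOfChain_le (g := chainOfTableau E F T) (m := m) hbox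
    have h2 := (hT.2.1 a j hbox.1 hbox.2).2
    exact le_antisymm ((hchar _ h2).mpr le_rfl) ((hchar _ h1).mp le_rfl)
  · rw [tableauOfChain, if_neg hbox, hT.2.2.1 a j hbox]

theorem kostka_eq_ncard_chains (hE : IsYoung E) (hF : IsYoung F) :
    kostka E F m M = {g | IsInterlacingChain E F m M g}.ncard := by
  have himage : {T | IsSkewSSYT E F m M T} =
      tableauOfChain E F m '' {g | IsInterlacingChain E F m M g} := by
    ext T
    exact ⟨fun hT => ⟨_, isInterlacingChain_chainOfTableau hE hF hT,
      tableauOfChain_chainOfTableau hE hF hT⟩,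
      fun ⟨g, hg, hgT⟩ => hgT ▸ isSkewSSYT_tableauOfChain hg⟩
  rw [kostka, himage, Set.InjOn.ncard_image]
  intro g₁ h₁ g₂ h₂ heq
  rw [← chainOfTableau_tableauOfChain h₁, ← chainOfTableau_tableauOfChain h₂, heq]

end Chains

section Omega

variable {k l : ℕ} {f : GammaAmb → ℕ}

theorem mem_omega_iff : f ∈ Omega k l ↔
    (∀ a b, gammaStep k l a b → f (Sum.inl b) ≤ f (Sum.inl a)) ∧
      ∀ p, p ∉ gammaTildeSet k l → f p = 0 := by
  refine ⟨fun ⟨hmono, hzero⟩ => ⟨fun a b hab =>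
    hmono _ _ (Or.inl ⟨a, b, rfl, rfl, Relation.ReflTransGen.single hab⟩), hzero⟩, ?_⟩
  rintro ⟨hstep, hzero⟩
  refine ⟨?_, hzero⟩
  rintro x y (⟨p, q, rfl, rfl, hpq⟩ | rfl)
  · induction hpq with
    | refl => exact le_rfl
    | tail _ hbc ih => exact (hstep _ _ hbc).trans ih
  · exact le_rfl

theorem apply_inl_eq_zero (hf : f ∈ Omega k l) {i : ℤ} {a : ℕ} (h : (i, a) ∉ gammaSet k l) :
    f (Sum.inl (i, a)) = 0 :=
  (mem_omega_iff.mp hf).2 _ (by simpa [gammaTildeSet] using h)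

theorem apply_inr_eq_zero (hf : f ∈ Omega k l) {p : ℕ × ℕ} (h : p ∉ epsSet l) :
    f (Sum.inr p) = 0 :=
  (mem_omega_iff.mp hf).2 _ (by simpa [gammaTildeSet] using h)

theorem apply_inl_le_of_step (hf : f ∈ Omega k l) {a b : ℤ × ℕ} (h : gammaStep k l a b) :
    f (Sum.inl b) ≤ f (Sum.inl a) :=
  (mem_omega_iff.mp hf).1 a b h

/-- Row `i` of `f`, 0-indexed like the Young diagrams: `row k l f i a = f_{i, a+1}`. -/
def row (k l : ℕ) (f : GammaAmb → ℕ) (i : ℤ) : ℕ →₀ ℕ :=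
  Finsupp.onFinset (Finset.range (k + l))
    (fun a => if a < k + l then f (Sum.inl (i, a + 1)) else 0)
    (fun _ ha => Finset.mem_range.mpr (by_contra fun h => ha (if_neg h)))

theorem row_apply (hf : f ∈ Omega k l) (i : ℤ) (a : ℕ) :
    row k l f i a = f (Sum.inl (i, a + 1)) := by
  simp only [row, Finsupp.onFinset_apply]
  split_ifs with h
  · rfl
  · refine (apply_inl_eq_zero hf ?_).symm
    simp only [gammaSet, Set.mem_ofPred_eq]
    omega

theorem row_le_row_succ (hf : f ∈ Omega k l) {i : ℕ} (hi : i < l) :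
    row k l f i ≤ row k l f (i + 1 : ℕ) := fun a => by
  rw [row_apply hf, row_apply hf]
  by_cases ha : a + 1 ≤ k + i
  · exact apply_inl_le_of_step hf (Or.inl ⟨i, a + 1, hi, by omega, ha, by simp, rfl⟩)
  · rw [apply_inl_eq_zero hf (by simp only [gammaSet, Set.mem_ofPred_eq]; omega)]
    exact Nat.zero_le _

theorem row_succ_apply_succ_le (hf : f ∈ Omega k l) {i : ℕ} (hi : i < l) (a : ℕ) :
    row k l f (i + 1 : ℕ) (a + 1) ≤ row k l f i a := by
  rw [row_apply hf, row_apply hf]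
  by_cases ha : a + 1 ≤ k + i
  · exact apply_inl_le_of_step hf (Or.inr (Or.inl ⟨i, a + 1, hi, by omega, ha, rfl, by simp⟩))
  · rw [apply_inl_eq_zero hf (by simp only [gammaSet, Set.mem_ofPred_eq]; omega)]
    exact Nat.zero_le _

theorem row_neg_le_row_neg_succ (hf : f ∈ Omega k l) {i : ℕ} (hi : i < l) :
    row k l f (-i) ≤ row k l f (-(i + 1 : ℕ)) := fun a => by
  rw [row_apply hf, row_apply hf]
  by_cases ha : a + 1 ≤ k
  · exact apply_inl_le_of_step hf
      (Or.inr (Or.inr (Or.inl ⟨i, a + 1, hi, by omega, ha, by push_cast; ring_nf, rfl⟩)))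
  · rw [apply_inl_eq_zero hf (by simp only [gammaSet, Set.mem_ofPred_eq]; omega)]
    exact Nat.zero_le _

theorem row_neg_succ_apply_succ_le (hf : f ∈ Omega k l) {i : ℕ} (hi : i < l) (a : ℕ) :
    row k l f (-(i + 1 : ℕ)) (a + 1) ≤ row k l f (-i) a := by
  rw [row_apply hf, row_apply hf]
  by_cases ha : a + 2 ≤ k
  · exact apply_inl_le_of_step hf
      (Or.inr (Or.inr (Or.inr ⟨i, a + 1, hi, by omega, ha, rfl, by push_cast; ring_nf⟩)))
  · rw [apply_inl_eq_zero hf (by simp only [gammaSet, Set.mem_ofPred_eq]; omega)]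
    exact Nat.zero_le _

theorem row_support_subset (i : ℤ) : (row k l f i).support ⊆ Finset.range (k + l) :=
  Finsupp.support_onFinset_subset

theorem sum_Icc_eq_ysize_row (hf : f ∈ Omega k l) {i : ℤ} {n : ℕ} (hn : n ≤ k + l)
    (hzero : ∀ a, n < a → f (Sum.inl (i, a)) = 0) :
    ∑ a ∈ Finset.Icc 1 n, f (Sum.inl (i, a)) = ysize (row k l f i) := calc
  _ = ∑ a ∈ Finset.range n, f (Sum.inl (i, a + 1)) := by
    rw [Finset.range_eq_Ico, Finset.sum_Ico_add' (fun a => f (Sum.inl (i, a))), zero_add,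
      Finset.Ico_add_one_right_eq_Icc]
  _ = ∑ a ∈ Finset.range (k + l), f (Sum.inl (i, a + 1)) :=
    Finset.sum_subset (Finset.range_subset_range.mpr hn) fun a _ ha =>
      hzero _ (by simpa using ha)
  _ = ysize (row k l f i) := by
    rw [ysize_eq_sum (row_support_subset i)]
    exact Finset.sum_congr rfl fun a _ => (row_apply hf i a).symm

end Omega

section Rows

variable {k l : ℕ} {f : GammaAmb → ℕ} {E F : ℕ →₀ ℕ} {m : ℕ} {g : ℕ → ℕ →₀ ℕ}

def increments (m : ℕ) (g : ℕ → ℕ →₀ ℕ) : Fin m → ℕ := fun i => ysize (g (i + 1)) - ysize (g i)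

theorem isInterlacingChain_increments (h0 : g 0 = E) (hm : ∀ i, m ≤ i → g i = F)
    (hle : ∀ i < m, g i ≤ g (i + 1)) (hsucc : ∀ i < m, ∀ j, g (i + 1) (j + 1) ≤ g i j) :
    IsInterlacingChain E F m (increments m g) g :=
  ⟨h0, hm, hle, hsucc, fun i => by
    have := ysize_mono (hle i i.isLt)
    simp only [increments]
    omega⟩

theorem IsInterlacingChain.increments_eq {M : Fin m → ℕ} (hg : IsInterlacingChain E F m M g) :
    increments m g = M :=
  funext fun i => by simp only [increments, hg.ysize_succ i, Nat.add_sub_cancel_left]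

def posChain (k l : ℕ) (f : GammaAmb → ℕ) (i : ℕ) : ℕ →₀ ℕ :=
  row k l f (min i l : ℕ)

def negChain (k l : ℕ) (f : GammaAmb → ℕ) (i : ℕ) : ℕ →₀ ℕ := row k l f (-(min i l : ℕ))

theorem posChain_of_le {i : ℕ} (h : i ≤ l) : posChain k l f i = row k l f i := by
  rw [posChain, min_eq_left h]

theorem negChain_of_le {i : ℕ} (h : i ≤ l) : negChain k l f i = row k l f (-i) := by
  rw [negChain, min_eq_left h]

theorem isInterlacingChain_posChain (hf : f ∈ Omega k l) :
    IsInterlacingChain (row k l f 0) (row k l f l) l (increments l (posChain k l f))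
      (posChain k l f) := by
  refine isInterlacingChain_increments (by simp [posChain])
    (fun i hi => by rw [posChain, min_eq_right hi]) (fun i hi => ?_) (fun i hi j => ?_)
  · rw [posChain_of_le hi.le, posChain_of_le hi]
    exact row_le_row_succ hf hi
  · rw [posChain_of_le hi.le, posChain_of_le hi]
    exact row_succ_apply_succ_le hf hi j

theorem isInterlacingChain_negChain (hf : f ∈ Omega k l) :
    IsInterlacingChain (row k l f 0) (row k l f (-l)) l (increments l (negChain k l f))
      (negChain k l f) := by
  refine isInterlacingChain_increments (by simp [negChain])
    (fun i hi => by rw [negChain, min_eq_right hi]) (fun i hi => ?_) (fun i hi j => ?_)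
  · rw [negChain_of_le hi.le, negChain_of_le hi]
    exact row_neg_le_row_neg_succ hf hi
  · rw [negChain_of_le hi.le, negChain_of_le hi]
    exact row_neg_succ_apply_succ_le hf hi j

theorem Afun_eq (hf : f ∈ Omega k l) {j : ℕ} (hj : j < l) :
    Afun k f (j + 1) = ysize (row k l f (j + 1 : ℕ)) - ysize (row k l f j) := by
  have hrow : ∀ i ≤ l, ∑ a ∈ Finset.Icc 1 (k + i), fval f i a = ysize (row k l f i) :=
    fun i hi => by
      simp only [fval]
      rw [← Nat.cast_sum, sum_Icc_eq_ysize_row hf (by omega) fun a ha =>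
        apply_inl_eq_zero hf (by simp only [gammaSet, Set.mem_ofPred_eq]; omega)]
  rw [Afun, show k + (j + 1) - 1 = k + j by omega,
    show ((j + 1 : ℕ) : ℤ) - 1 = j by push_cast; ring, hrow _ hj, hrow _ hj.le]

theorem Bfun_eq (hf : f ∈ Omega k l) {j : ℕ} (hj : j < l) :
    Bfun k f (j + 1) = ysize (row k l f (-(j + 1 : ℕ))) - ysize (row k l f (-j)) := by
  have hrow : ∀ i ≤ l, ∑ a ∈ Finset.Icc 1 k, fval f (-i) a = ysize (row k l f (-i)) :=
    fun i hi => by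
      simp only [fval]
      rw [← Nat.cast_sum, sum_Icc_eq_ysize_row hf (by omega) fun a ha =>
        apply_inl_eq_zero hf (by simp only [gammaSet, Set.mem_ofPred_eq]; omega)]
  rw [Bfun, Finset.sum_sub_distrib, show -((j + 1 : ℕ) : ℤ) + 1 = -(j : ℤ) by push_cast; ring,
    hrow _ hj, hrow _ hj.le]

theorem Pfun_eq_Scomb (hf : f ∈ Omega k l) (j : Fin l) :
    Pfun k l f (j + 1) = (Scomb l (increments l (posChain k l f))
      (increments l (negChain k l f)) (fun p => f (Sum.inr p)) j : ℤ) := by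
  have hA := ysize_mono (row_le_row_succ hf j.isLt)
  have hB := ysize_mono (row_neg_le_row_neg_succ hf j.isLt)
  simp only [Pfun, Scomb, increments, Afun_eq hf j.isLt, Bfun_eq hf j.isLt]
  have hj : (j : ℕ) + 1 ≤ l := j.isLt
  rw [posChain_of_le hj, posChain_of_le j.isLt.le, negChain_of_le hj,
    negChain_of_le j.isLt.le, show (j : ℕ) + 1 + 1 = j + 2 by ring]
  simp only [Nat.cast_add, Nat.cast_sum, Nat.cast_one] at hA hB ⊢
  omega

end Rows

section OmegaFDP

variable {k l : ℕ} {f : GammaAmb → ℕ} {D F : ℕ →₀ ℕ} {P : Fin l → ℕ}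

theorem row_apply_of_le (i : ℤ) {a : ℕ} (h : k + l ≤ a) : row k l f i a = 0 := by
  simp [row, show ¬a < k + l by omega]

theorem row_neg_apply_of_le (hf : f ∈ Omega k l) (i : ℕ) {a : ℕ} (h : k ≤ a) :
    row k l f (-i) a = 0 := by
  rw [row_apply hf]
  exact apply_inl_eq_zero hf (by simp only [gammaSet, Set.mem_ofPred_eq]; omega)

theorem row_top_apply (hf : f ∈ OmegaFDP k l D F P) {a : ℕ} (ha : a < k + l) :
    row k l f l a = F a := by
  rw [row_apply hf.1]
  simpa using hf.2.2.1 (a + 1) (by omega) (by omega)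

theorem row_bot_apply (hf : f ∈ OmegaFDP k l D F P) {a : ℕ} (ha : a < k) :
    row k l f (-l) a = D a := by
  rw [row_apply hf.1]
  simpa using hf.2.1 (a + 1) (by omega) (by omega)

theorem row_top_le (hf : f ∈ OmegaFDP k l D F P) : row k l f l ≤ F := fun a => by
  rcases lt_or_ge a (k + l) with h | h
  · exact (row_top_apply hf h).le
  · simp [row_apply_of_le _ h]

theorem row_bot_le (hf : f ∈ OmegaFDP k l D F P) : row k l f (-l) ≤ D := fun a => by
  rcases lt_or_ge a k with h | h
  · exact (row_bot_apply hf h).le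
  · simp [row_neg_apply_of_le hf.1 l h]

theorem row_top_eq (hf : f ∈ OmegaFDP k l D F P) (hrF : ∀ i, k + l ≤ i → F i = 0) :
    row k l f l = F := Finsupp.ext fun a => by
  rcases lt_or_ge a (k + l) with h | h
  · exact row_top_apply hf h
  · rw [row_apply_of_le _ h, hrF a h]

theorem row_bot_eq (hf : f ∈ OmegaFDP k l D F P) (hrD : ∀ i, k ≤ i → D i = 0) :
    row k l f (-l) = D := Finsupp.ext fun a => by
  rcases lt_or_ge a k with h | h
  · exact row_bot_apply hf h
  · rw [row_neg_apply_of_le hf.1 l h, hrD a h]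

theorem Scomb_eq_of_mem_OmegaFDP (hf : f ∈ OmegaFDP k l D F P) :
    Scomb l (increments l (posChain k l f)) (increments l (negChain k l f))
      (fun p => f (Sum.inr p)) = P :=
  funext fun j => by exact_mod_cast (Pfun_eq_Scomb hf.1 j).symm.trans (hf.2.2.2 j)

theorem apply_le_sum_of_Scomb_eq {A B : Fin l → ℕ} {C : ℕ × ℕ → ℕ}
    (hC : ∀ p, p ∉ epsSet l → C p = 0) (hS : Scomb l A B C = P) (p : ℕ × ℕ) :
    C p ≤ ∑ j, P j := by
  by_cases hp : p ∈ epsSet l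
  · obtain ⟨s, t⟩ := p
    obtain ⟨hs, hst, ht⟩ : 1 ≤ s ∧ s < t ∧ t ≤ l := hp
    obtain ⟨t, rfl⟩ : ∃ t', t = t' + 1 := ⟨t - 1, by omega⟩
    let j : Fin l := ⟨t, by omega⟩
    calc C (s, t + 1) ≤ ∑ s' ∈ Finset.Ico 1 (t + 1), C (s', t + 1) :=
          Finset.single_le_sum (f := fun s' => C (s', t + 1)) (fun _ _ => Nat.zero_le _)
            (Finset.mem_Ico.mpr ⟨hs, hst⟩)
      _ ≤ Scomb l A B C j := by simp only [Scomb, j]; omega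
      _ = P j := congrFun hS j
      _ ≤ ∑ j, P j := Finset.single_le_sum (fun _ _ => Nat.zero_le _) (Finset.mem_univ j)
  · simp [hC p hp]

theorem apply_le_of_mem_OmegaFDP (hf : f ∈ OmegaFDP k l D F P) (p : GammaAmb) :
    f p ≤ ysize F + ysize D + ∑ j, P j := by
  rcases p with ⟨i, _ | a⟩ | p
  · simp [apply_inl_eq_zero hf.1 (i := i) (a := 0) (by simp [gammaSet])]
  · obtain ⟨n, rfl | rfl⟩ := Int.eq_nat_or_neg i
    · rcases le_or_gt n l with hn | hn
      · have hle := (isInterlacingChain_posChain hf.1).le_target n a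
        rw [posChain_of_le hn, row_apply hf.1] at hle
        have := (row_top_le hf a).trans (apply_le_ysize F a)
        omega
      · simp [apply_inl_eq_zero hf.1 (i := n) (a := a + 1)
          (by simp only [gammaSet, Set.mem_ofPred_eq]; omega)]
    · rcases le_or_gt n l with hn | hn
      · have hle := (isInterlacingChain_negChain hf.1).le_target n a
        rw [negChain_of_le hn, row_apply hf.1] at hle
        have := (row_bot_le hf a).trans (apply_le_ysize D a)
        omega
      · simp [apply_inl_eq_zero hf.1 (i := -n) (a := a + 1)
          (by simp only [gammaSet, Set.mem_ofPred_eq]; omega)]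
  · have := apply_le_sum_of_Scomb_eq (fun p hp => apply_inr_eq_zero hf.1 hp)
      (Scomb_eq_of_mem_OmegaFDP hf) p
    omega

theorem gammaTildeSet_finite : (gammaTildeSet k l).Finite := by
  refine Set.Finite.union (Set.Finite.image _ ?_) (Set.Finite.image _ ?_)
  · refine ((Set.finite_Icc (-(l : ℤ)) l).prod (Set.finite_Icc 0 (k + l))).subset ?_
    rintro ⟨i, a⟩ ⟨h1, h2, -, h4⟩
    exact ⟨⟨h1, h2⟩, Nat.zero_le _, by omega⟩
  · refine ((Set.finite_Icc 0 l).prod (Set.finite_Icc 0 l)).subset ?_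
    rintro ⟨s, t⟩ ⟨-, h2, h3⟩
    exact ⟨⟨Nat.zero_le _, by omega⟩, Nat.zero_le _, h3⟩

theorem finite_setOf_le_of_eq_zero {α : Type*} {s : Set α} (hs : s.Finite) (N : ℕ) :
    {f : α → ℕ | (∀ p, f p ≤ N) ∧ ∀ p, p ∉ s → f p = 0}.Finite := by
  have : Finite s := hs
  refine Set.Finite.of_finite_image (f := fun f (p : s) => f p)
    ((Set.Finite.pi (t := fun _ : s => Set.Iic N) fun _ => Set.finite_Iic N).subset ?_) ?_
  · rintro _ ⟨f, hf, rfl⟩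
    exact Set.mem_univ_pi.mpr fun p => hf.1 p
  · intro f hf f' hf' heq
    funext p
    by_cases hp : p ∈ s
    · exact congrFun heq ⟨p, hp⟩
    · rw [hf.2 p hp, hf'.2 p hp]

theorem omegaFDP_finite : (OmegaFDP k l D F P).Finite :=
  (finite_setOf_le_of_eq_zero gammaTildeSet_finite _).subset fun _ hf =>
    ⟨apply_le_of_mem_OmegaFDP hf, (mem_omega_iff.mp hf.1).2⟩

end OmegaFDP

section ChainData

variable {k l : ℕ} {f : GammaAmb → ℕ} {D F : ℕ →₀ ℕ} {P : Fin l → ℕ}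

abbrev Shape (l : ℕ) : Type := (ℕ →₀ ℕ) × (Fin l → ℕ) × (Fin l → ℕ) × (ℕ × ℕ → ℕ)

abbrev ChainPair : Type := (ℕ → ℕ →₀ ℕ) × (ℕ → ℕ →₀ ℕ)

def IsAdmissible (k l : ℕ) (P : Fin l → ℕ) (E : ℕ →₀ ℕ) (A B : Fin l → ℕ) (C : ℕ × ℕ → ℕ) :
    Prop :=
  IsYoung E ∧ (∀ i, k ≤ i → E i = 0) ∧ (∀ p, p ∉ epsSet l → C p = 0) ∧ Scomb l A B C = P

def chainData (k l : ℕ) (D F : ℕ →₀ ℕ) (P : Fin l → ℕ) : Set (Shape l × ChainPair) :=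
  {x | IsAdmissible k l P x.1.1 x.1.2.1 x.1.2.2.1 x.1.2.2.2 ∧
    IsInterlacingChain x.1.1 F l x.1.2.1 x.2.1 ∧ IsInterlacingChain x.1.1 D l x.1.2.2.1 x.2.2}

def toChainData (k l : ℕ) (f : GammaAmb → ℕ) : Shape l × ChainPair :=
  ((row k l f 0, increments l (posChain k l f), increments l (negChain k l f),
      fun p => f (Sum.inr p)),
    (posChain k l f, negChain k l f))

def ofChainData (l : ℕ) (x : Shape l × ChainPair) : GammaAmb → ℕ
  | Sum.inl (i, a) =>
    if a = 0 ∨ i < -l ∨ l < i then 0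
    else if 0 ≤ i then x.2.1 i.toNat (a - 1) else x.2.2 (-i).toNat (a - 1)
  | Sum.inr p => x.1.2.2.2 p

theorem ofChainData_inl_eq_zero (x : Shape l × ChainPair) {i : ℤ} {a : ℕ}
    (h : a = 0 ∨ i < -l ∨ l < i) : ofChainData l x (Sum.inl (i, a)) = 0 := by
  simp only [ofChainData, if_pos h]

theorem ofChainData_inl_nat (x : Shape l × ChainPair) {i : ℕ} (hi : i ≤ l) (a : ℕ) :
    ofChainData l x (Sum.inl (i, a + 1)) = x.2.1 i a := by
  simp only [ofChainData, if_neg (show ¬(a + 1 = 0 ∨ (i : ℤ) < -l ∨ (l : ℤ) < i) by omega),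
    if_pos (Int.natCast_nonneg i), Int.toNat_natCast, Nat.add_sub_cancel]

theorem ofChainData_inl_neg (x : Shape l × ChainPair) (h0 : x.2.1 0 = x.2.2 0) {i : ℕ}
    (hi : i ≤ l) (a : ℕ) : ofChainData l x (Sum.inl (-i, a + 1)) = x.2.2 i a := by
  rcases i.eq_zero_or_pos with rfl | hpos
  · simpa [h0] using ofChainData_inl_nat x hi a
  · simp only [ofChainData, if_neg (show ¬(a + 1 = 0 ∨ -(i : ℤ) < -l ∨ (l : ℤ) < -i) by omega),
      if_neg (show ¬(0 : ℤ) ≤ -i by omega), neg_neg, Int.toNat_natCast, Nat.add_sub_cancel]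

theorem ofChainData_toChainData (hf : f ∈ Omega k l) : ofChainData l (toChainData k l f) = f := by
  funext p
  rcases p with ⟨i, _ | a⟩ | p
  · rw [ofChainData_inl_eq_zero _ (Or.inl rfl), apply_inl_eq_zero hf (by simp [gammaSet])]
  · obtain ⟨n, rfl | rfl⟩ := Int.eq_nat_or_neg i <;> rcases le_or_gt n l with hn | hn
    · rw [ofChainData_inl_nat _ hn]
      show posChain k l f n a = _
      rw [posChain_of_le hn, row_apply hf]
    · rw [ofChainData_inl_eq_zero _ (by omega),
        apply_inl_eq_zero hf (by simp only [gammaSet, Set.mem_ofPred_eq]; omega)]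
    · rw [ofChainData_inl_neg _ (by simp [toChainData, posChain, negChain]) hn]
      show negChain k l f n a = _
      rw [negChain_of_le hn, row_apply hf]
    · rw [ofChainData_inl_eq_zero _ (by omega),
        apply_inl_eq_zero hf (by simp only [gammaSet, Set.mem_ofPred_eq]; omega)]
  · rfl

theorem toChainData_mapsTo (hl : 0 < l) (hrD : ∀ i, k ≤ i → D i = 0)
    (hrF : ∀ i, k + l ≤ i → F i = 0) :
    Set.MapsTo (toChainData k l) (OmegaFDP k l D F P) (chainData k l D F P) := by
  intro f hf
  refine ⟨⟨fun a => ?_, fun a ha => ?_, fun p hp => apply_inr_eq_zero hf.1 hp,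
    Scomb_eq_of_mem_OmegaFDP hf⟩, row_top_eq hf hrF ▸ isInterlacingChain_posChain hf.1,
    row_bot_eq hf hrD ▸ isInterlacingChain_negChain hf.1⟩
  · show row k l f 0 (a + 1) ≤ row k l f 0 a
    simpa using (row_le_row_succ hf.1 hl (a + 1)).trans (row_succ_apply_succ_le hf.1 hl a)
  · show row k l f 0 a = 0
    simpa using row_neg_apply_of_le hf.1 0 ha

theorem ofChainData_mem_omega (hrD : ∀ i, k ≤ i → D i = 0) (hrF : ∀ i, k + l ≤ i → F i = 0)
    {x : Shape l × ChainPair} (hx : x ∈ chainData k l D F P) : ofChainData l x ∈ Omega k l := by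
  obtain ⟨⟨E, A, B, C⟩, g, h⟩ := x
  obtain ⟨⟨-, hE, hC, -⟩, hg, hh⟩ := hx
  have h0 : g 0 = h 0 := hg.zero.trans hh.zero.symm
  have hsucc : ∀ i : ℕ, (i : ℤ) + 1 = (i + 1 : ℕ) := fun i => by push_cast; ring
  have hpred : ∀ i : ℕ, -(i : ℤ) - 1 = -(i + 1 : ℕ) := fun i => by push_cast; ring
  refine mem_omega_iff.mpr ⟨?_, ?_⟩
  · rintro a b (⟨i, j, hi, hj, -, rfl, rfl⟩ | ⟨i, j, hi, hj, -, rfl, rfl⟩ |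
      ⟨i, j, hi, hj, -, rfl, rfl⟩ | ⟨i, j, hi, hj, -, rfl, rfl⟩) <;>
      obtain ⟨j, rfl⟩ := Nat.exists_eq_add_of_le' hj
    · rw [hsucc, ofChainData_inl_nat _ hi.le, ofChainData_inl_nat _ hi]
      exact hg.le_succ i hi j
    · rw [hsucc, ofChainData_inl_nat _ hi.le, ofChainData_inl_nat _ hi]
      exact hg.succ_succ_le i hi j
    · rw [hpred, ofChainData_inl_neg _ h0 hi.le, ofChainData_inl_neg _ h0 hi]
      exact hh.le_succ i hi j
    · rw [hpred, ofChainData_inl_neg _ h0 hi.le, ofChainData_inl_neg _ h0 hi]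
      exact hh.succ_succ_le i hi j
  · rintro (⟨i, _ | a⟩ | p) hp
    · exact ofChainData_inl_eq_zero _ (Or.inl rfl)
    · simp only [gammaTildeSet, gammaSet, Set.mem_union, Set.mem_image, Set.mem_ofPred_eq,
        Sum.inl.injEq, reduceCtorEq, and_false, exists_false, or_false, not_exists, not_and,
        Prod.forall, Prod.mk.injEq] at hp
      have hp := hp i (a + 1)
      obtain ⟨n, rfl | rfl⟩ := Int.eq_nat_or_neg i <;> rcases le_or_gt n l with hn | hn
      · rw [ofChainData_inl_nat _ hn]
        exact hg.apply_eq_zero hE hrF n a (by rw [min_eq_left hn]; omega)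
      · exact ofChainData_inl_eq_zero _ (by omega)
      · rw [ofChainData_inl_neg _ h0 hn]
        have := hh.le_target n a
        rw [hrD a (by omega)] at this
        omega
      · exact ofChainData_inl_eq_zero _ (by omega)
    · exact hC p (by simpa [gammaTildeSet] using hp)

theorem posChain_ofChainData {x : Shape l × ChainPair} (hΩ : ofChainData l x ∈ Omega k l)
    (hg : IsInterlacingChain x.1.1 F l x.1.2.1 x.2.1) : posChain k l (ofChainData l x) = x.2.1 :=
  funext fun i => Finsupp.ext fun a => by
    rw [posChain, row_apply hΩ, ofChainData_inl_nat _ (min_le_right i l), hg.apply_min]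

theorem negChain_ofChainData {x : Shape l × ChainPair} (hΩ : ofChainData l x ∈ Omega k l)
    (h0 : x.2.1 0 = x.2.2 0) (hh : IsInterlacingChain x.1.1 D l x.1.2.2.1 x.2.2) :
    negChain k l (ofChainData l x) = x.2.2 :=
  funext fun i => Finsupp.ext fun a => by
    rw [negChain, row_apply hΩ, ofChainData_inl_neg _ h0 (min_le_right i l), hh.apply_min]

theorem ofChainData_mapsTo (hrD : ∀ i, k ≤ i → D i = 0) (hrF : ∀ i, k + l ≤ i → F i = 0) :
    Set.MapsTo (ofChainData l) (chainData k l D F P) (OmegaFDP k l D F P) := by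
  rintro ⟨⟨E, A, B, C⟩, g, h⟩ hx
  have hΩ := ofChainData_mem_omega hrD hrF hx
  obtain ⟨⟨-, -, -, hS⟩, hg, hh⟩ := hx
  have h0 : g 0 = h 0 := hg.zero.trans hh.zero.symm
  refine ⟨hΩ, fun a ha _ => ?_, fun a ha _ => ?_, fun j => ?_⟩
  · obtain ⟨a, rfl⟩ := Nat.exists_eq_add_of_le' ha
    rw [ofChainData_inl_neg _ h0 le_rfl, hh.eq_of_le l le_rfl, Nat.add_sub_cancel]
  · obtain ⟨a, rfl⟩ := Nat.exists_eq_add_of_le' ha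
    rw [ofChainData_inl_nat _ le_rfl, hg.eq_of_le l le_rfl, Nat.add_sub_cancel]
  · rw [Pfun_eq_Scomb hΩ j, posChain_ofChainData hΩ hg, negChain_ofChainData hΩ h0 hh,
      hg.increments_eq, hh.increments_eq]
    exact_mod_cast congrFun hS j

theorem toChainData_ofChainData (hrD : ∀ i, k ≤ i → D i = 0) (hrF : ∀ i, k + l ≤ i → F i = 0) :
    Set.LeftInvOn (toChainData k l) (ofChainData l) (chainData k l D F P) := by
  rintro ⟨⟨E, A, B, C⟩, g, h⟩ hx
  have hΩ := ofChainData_mem_omega hrD hrF hx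
  obtain ⟨-, hg, hh⟩ := hx
  have hpos := posChain_ofChainData hΩ hg
  have hneg := negChain_ofChainData hΩ (hg.zero.trans hh.zero.symm) hh
  have hrow : row k l (ofChainData l ((E, A, B, C), g, h)) 0 = E :=
    (by simpa [posChain] using congrFun hpos 0 : _ = g 0).trans hg.zero
  simp only [toChainData, hrow, hpos, hneg, hg.increments_eq, hh.increments_eq]
  rfl

theorem bijOn_toChainData (hl : 0 < l) (hrD : ∀ i, k ≤ i → D i = 0)
    (hrF : ∀ i, k + l ≤ i → F i = 0) :
    Set.BijOn (toChainData k l) (OmegaFDP k l D F P) (chainData k l D F P) :=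
  Set.InvOn.bijOn ⟨fun _ hf => ofChainData_toChainData hf.1, toChainData_ofChainData hrD hrF⟩
    (toChainData_mapsTo hl hrD hrF) (ofChainData_mapsTo hrD hrF)

end ChainData

section Counting

theorem ncard_eq_finsum_ncard_fiber {α β : Type*} {s : Set (α × β)} (hs : s.Finite) :
    s.ncard = ∑ᶠ a, {b | (a, b) ∈ s}.ncard := by
  classical
  have hfiber : ∀ a, {b | (a, b) ∈ s}.ncard = (hs.toFinset.filter fun x => x.1 = a).card := by
    intro a
    rw [← Set.ncard_coe_finset, ← (Prod.mk_right_injective a).injOn.ncard_image]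
    congr 1
    ext ⟨a', b⟩
    simp only [Set.mem_image, Set.mem_ofPred_eq, Prod.mk.injEq, Finset.coe_filter,
      Set.Finite.mem_toFinset]
    constructor
    · rintro ⟨b, hb, rfl, rfl⟩
      exact ⟨hb, rfl⟩
    · rintro ⟨hb, rfl⟩
      exact ⟨b, hb, rfl, rfl⟩
  rw [Set.ncard_eq_toFinset_card s hs, Finset.card_eq_sum_card_image Prod.fst,
    finsum_eq_sum_of_support_subset _ (s := hs.toFinset.image Prod.fst)]
  · exact Finset.sum_congr rfl fun a _ => (hfiber a).symm
  · intro a ha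
    obtain ⟨b, hb⟩ := Set.nonempty_of_ncard_ne_zero ha
    exact Finset.mem_coe.mpr (Finset.mem_image.mpr ⟨(a, b), hs.mem_toFinset.mpr hb, rfl⟩)

theorem finsum_curry₄ {α β γ δ M : Type*} [AddCommMonoid M] (f : α × β × γ × δ → M)
    (hf : f.HasFiniteSupport) : ∑ᶠ x, f x = ∑ᶠ (a) (b) (c) (d), f (a, b, c, d) := by
  rw [finsum_curry₃ f hf]
  refine finsum_congr fun a => finsum_congr fun b => ?_
  exact finsum_curry _ (hf.fun_comp_of_injective fun x y h => by simpa using h)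

variable {k l : ℕ} {D F : ℕ →₀ ℕ} {P : Fin l → ℕ}

theorem ncard_fiber_chainData (hD : IsYoung D) (hF : IsYoung F) (E : ℕ →₀ ℕ)
    (A B : Fin l → ℕ) (C : ℕ × ℕ → ℕ) :
    {gh : ChainPair | ((E, A, B, C), gh) ∈ chainData k l D F P}.ncard =
      if IsAdmissible k l P E A B C then kostka E F l A * kostka E D l B else 0 := by
  split_ifs with hq
  · have hfiber : {gh : ChainPair | ((E, A, B, C), gh) ∈ chainData k l D F P} =
        {g | IsInterlacingChain E F l A g} ×ˢ {h | IsInterlacingChain E D l B h} := by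
      ext gh
      exact ⟨fun hx => hx.2, fun hx => ⟨hq, hx⟩⟩
    rw [hfiber, Set.ncard_prod, kostka_eq_ncard_chains hq.1 hF, kostka_eq_ncard_chains hq.1 hD]
  · have hempty : {gh : ChainPair | ((E, A, B, C), gh) ∈ chainData k l D F P} = ∅ :=
      Set.eq_empty_of_forall_notMem fun _ hx => hq hx.1
    rw [hempty, Set.ncard_empty]

end Counting

theorem statement_3_general (k l : ℕ) (hl : 0 < l)
    (D F : ℕ →₀ ℕ) (hD : IsYoung D) (hF : IsYoung F)
    (hrD : ∀ i, k ≤ i → D i = 0) (hrF : ∀ i, k + l ≤ i → F i = 0) (P : Fin l → ℕ) :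
    (OmegaFDP k l D F P).Finite ∧
    (OmegaFDP k l D F P).ncard =
      ∑ᶠ (E : ℕ →₀ ℕ) (A : Fin l → ℕ) (B : Fin l → ℕ) (C : ℕ × ℕ → ℕ),
        (if IsYoung E ∧ (∀ i, k ≤ i → E i = 0) ∧ (∀ p, p ∉ epsSet l → C p = 0) ∧
            Scomb l A B C = P
         then kostka E F l A * kostka E D l B else 0) := by
  have hbij := bijOn_toChainData (P := P) hl hrD hrF
  have hfin : (chainData k l D F P).Finite := hbij.image_eq ▸ omegaFDP_finite.image _
  refine ⟨omegaFDP_finite, ?_⟩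
  calc (OmegaFDP k l D F P).ncard = (chainData k l D F P).ncard := by
        rw [← hbij.image_eq, hbij.injOn.ncard_image]
    _ = ∑ᶠ q, {gh | (q, gh) ∈ chainData k l D F P}.ncard := ncard_eq_finsum_ncard_fiber hfin
    _ = _ := by
      rw [finsum_curry₄]
      · refine finsum_congr fun E => finsum_congr fun A => finsum_congr fun B =>
          finsum_congr fun C => (ncard_fiber_chainData hD hF E A B C).trans ?_
        exact if_congr Iff.rfl rfl rfl
      · refine (hfin.image Prod.fst).subset fun q hq => ?_
        obtain ⟨gh, hgh⟩ := Set.nonempty_of_ncard_ne_zero hq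
        exact ⟨(q, gh), hgh, rfl⟩

theorem statement_3 (k l : ℕ) (hk : 0 < k) (hl : 0 < l)
    (D F : ℕ →₀ ℕ) (hD : IsYoung D) (hF : IsYoung F)
    (hrD : ∀ i, k ≤ i → D i = 0) (hrF : ∀ i, k + l ≤ i → F i = 0) (P : Fin l → ℕ) :
    (OmegaFDP k l D F P).Finite ∧
    (OmegaFDP k l D F P).ncard =
      ∑ᶠ (E : ℕ →₀ ℕ) (A : Fin l → ℕ) (B : Fin l → ℕ) (C : ℕ × ℕ → ℕ),
        (if IsYoung E ∧ (∀ i, k ≤ i → E i = 0) ∧ (∀ p, p ∉ epsSet l → C p = 0) ∧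
            Scomb l A B C = P
         then kostka E F l A * kostka E D l B else 0) :=
  statement_3_general k l hl D F hD hF hrD hrF P

end Pieri
end
end

section
/- Let k and ℓ be positive integers, let E, D, F be Young diagrams with r(E) ≤ k, r(D) ≤ k and r(F) ≤ k+ℓ, and let A, B ∈ (ℤ_{≥0})^ℓ and C ∈ (ℤ_{≥0})^{ℓ(ℓ−1)/2}. Then the number of f ∈ Ω(k,ℓ) with f_{−ℓ} = D, f_0 = E, f_ℓ = F, A(f) = A, B(f) = B and C(f) = C equals K_{F/E,A} · K_{D/E,B}. -/
open MvPolynomial TensorProduct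
open scoped Classical

noncomputable section

namespace Pieri

/-! An element `f` of the fibre is determined by `C` and by its two chains of rows
`E = f_0, f_1, …, f_ℓ = F` and `E = f_0, f_{-1}, …, f_{-ℓ} = D`. The defining relations of
`Γ(k,ℓ)` say exactly that consecutive rows of each chain interlace, i.e. that each chain is a
Gelfand–Tsetlin pattern, and `A(f)`, `B(f)` are the weights of the two patterns. Patterns from
`E` to `G` of weight `M` correspond to semistandard skew tableaux of shape `G/E` and content `M`,
the `r`-th shape of the pattern being `E` together with the boxes of entry `≤ r`. The rows of
`f_r` missing from `Γ(k,ℓ)` (those beyond `k + r`) cause no trouble: in a pattern starting at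
a diagram with at most `k` rows they vanish automatically. -/

open Finset

lemma lt_add_card_filter_Ico_iff {a b x : ℕ} {p : ℕ → Prop} [DecidablePred p]
    (hp : ∀ y z, a ≤ y → y ≤ z → z < b → p z → p y) (hax : a ≤ x) (hxb : x < b) :
    x < a + #{y ∈ Ico a b | p y} ↔ p x := by
  constructor
  · intro hx
    by_contra hpx
    have hsub : {y ∈ Ico a b | p y} ⊆ Ico a x := fun y hy => by
      simp only [mem_filter, mem_Ico] at hy ⊢
      exact ⟨hy.1.1, lt_of_not_ge fun hxy => hpx (hp x y hax hxy hy.1.2 hy.2)⟩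
    have := card_le_card hsub
    rw [Nat.card_Ico] at this
    omega
  · intro hpx
    have hsub : Ico a (x + 1) ⊆ {y ∈ Ico a b | p y} := fun y hy => by
      simp only [mem_filter, mem_Ico] at hy ⊢
      exact ⟨⟨hy.1, by omega⟩, hp y x hy.1 (by omega) hxb hpx⟩
    have := card_le_card hsub
    rw [Nat.card_Ico] at this
    omega

def IsHorizontalStrip (c c' : ℕ → ℕ) : Prop := ∀ i, c i ≤ c' i ∧ c' (i + 1) ≤ c i

/-- A Gelfand–Tsetlin pattern `E = c 0 ⊆ c 1 ⊆ ⋯ ⊆ c l = G` with weight `M`, the weight being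
counted in the first `n` rows. -/
structure IsGTPattern (l n : ℕ) (E G : ℕ →₀ ℕ) (M : Fin l → ℕ) (c : ℕ → ℕ → ℕ) : Prop where
  strip : ∀ r < l, IsHorizontalStrip (c r) (c (r + 1))
  zero : c 0 = E
  last : c l = G
  sum_sub : ∀ r : Fin l, ∑ i ∈ range n, ((c (r + 1) i : ℤ) - c r i) = M r

def patternOfTableau (E G : ℕ →₀ ℕ) (T : ℕ × ℕ → ℕ) (r i : ℕ) : ℕ :=
  E i + #{j ∈ Ico (E i) (G i) | T (i, j) ≤ r}

/-- The entry of box `(i, j)` is the first `r` with `j < c r i`. -/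
def tableauOfPattern (E G : ℕ →₀ ℕ) (l : ℕ) (c : ℕ → ℕ → ℕ) (p : ℕ × ℕ) : ℕ :=
  if E p.1 ≤ p.2 ∧ p.2 < G p.1 then #{r ∈ range l | c r p.1 ≤ p.2} else 0

section GTPattern

variable {l n : ℕ} {E G : ℕ →₀ ℕ} {M : Fin l → ℕ} {c c' : ℕ → ℕ → ℕ} {T : ℕ × ℕ → ℕ}
  {i j r s : ℕ}

namespace IsGTPattern

lemma mono (hc : IsGTPattern l n E G M c) (hrs : r ≤ s) (hs : s ≤ l) (i : ℕ) :
    c r i ≤ c s i := by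
  have : MonotoneOn (fun r => c r i) (Set.Iic l) :=
    monotoneOn_of_le_add_one Set.ordConnected_Iic fun r _ _ hr => (hc.strip r hr i).1
  exact this (Set.mem_Iic.2 (hrs.trans hs)) (Set.mem_Iic.2 hs) hrs

lemma zero_le (hc : IsGTPattern l n E G M c) (hr : r ≤ l) (i : ℕ) : E i ≤ c r i :=
  hc.zero ▸ hc.mono (Nat.zero_le r) hr i

lemma le_last (hc : IsGTPattern l n E G M c) (hr : r ≤ l) (i : ℕ) : c r i ≤ G i :=
  hc.last ▸ hc.mono hr le_rfl i

lemma eq_zero_of_add_le {k : ℕ} (hc : IsGTPattern l n E G M c) (hE : ∀ i, k ≤ i → E i = 0)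
    (hr : r ≤ l) (hi : k + r ≤ i) : c r i = 0 := by
  induction r generalizing i with
  | zero => rw [hc.zero]; exact hE i (by omega)
  | succ r ih =>
    obtain ⟨i, rfl⟩ : ∃ i', i = i' + 1 := ⟨i - 1, by omega⟩
    have := (hc.strip r (by omega) i).2
    rw [ih (by omega) (by omega)] at this
    omega

lemma congr (hc : IsGTPattern l n E G M c) (h : ∀ r ≤ l, c' r = c r) :
    IsGTPattern l n E G M c' where
  strip r hr := by rw [h r hr.le, h (r + 1) hr]; exact hc.strip r hr
  zero := by rw [h 0 (Nat.zero_le l), hc.zero]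
  last := by rw [h l le_rfl, hc.last]
  sum_sub r := by rw [← hc.sum_sub r, h _ r.isLt, h _ r.isLt.le]

lemma le_iff_lt_tableauOfPattern (hc : IsGTPattern l n E G M c) (hEj : E i ≤ j)
    (hjG : j < G i) (hr : r ≤ l) : c r i ≤ j ↔ r < tableauOfPattern E G l c (i, j) := by
  rw [tableauOfPattern, if_pos ⟨hEj, hjG⟩]
  rcases hr.lt_or_eq with hr | rfl
  · rw [range_eq_Ico, ← zero_add #_, lt_add_card_filter_Ico_iff _ (Nat.zero_le r) hr]
    exact fun y z _ hyz hz h => (hc.mono hyz hz.le i).trans h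
  · refine iff_of_false (by rw [hc.last]; omega) (not_lt.2 ?_)
    exact (card_filter_le _ _).trans (card_range r).le

lemma patternOfTableau_tableauOfPattern (hc : IsGTPattern l n E G M c) (hr : r ≤ l) :
    patternOfTableau E G (tableauOfPattern E G l c) r = c r := by
  funext i
  have hfilter :
      {j ∈ Ico (E i) (G i) | tableauOfPattern E G l c (i, j) ≤ r} = Ico (E i) (c r i) := by
    ext j
    simp only [mem_filter, mem_Ico]
    constructor
    · rintro ⟨⟨hEj, hjG⟩, hT⟩
      exact ⟨hEj, not_le.1 fun h => (hc.le_iff_lt_tableauOfPattern hEj hjG hr).1 h |>.not_ge hT⟩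
    · rintro ⟨hEj, hjc⟩
      have hjG := hjc.trans_le (hc.le_last hr i)
      exact ⟨⟨hEj, hjG⟩,
        not_lt.1 fun h => (hc.le_iff_lt_tableauOfPattern hEj hjG hr).2 h |>.not_gt hjc⟩
  rw [patternOfTableau, hfilter, Nat.card_Ico]
  have := hc.zero_le hr i
  omega

end IsGTPattern

lemma patternOfTableau_mono (E G : ℕ →₀ ℕ) (T : ℕ × ℕ → ℕ) (hrs : r ≤ s) (i : ℕ) :
    patternOfTableau E G T r i ≤ patternOfTableau E G T s i :=
  Nat.add_le_add_left (card_le_card (monotone_filter_right _ fun _ _ h => h.trans hrs)) _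

lemma patternOfTableau_le (hEG : E i ≤ G i) (T : ℕ × ℕ → ℕ) (r : ℕ) :
    patternOfTableau E G T r i ≤ G i := by
  have := (card_filter_le (Ico (E i) (G i)) fun j => T (i, j) ≤ r).trans_eq (Nat.card_Ico _ _)
  rw [patternOfTableau]
  omega

lemma patternOfTableau_succ (E G : ℕ →₀ ℕ) (T : ℕ × ℕ → ℕ) (r i : ℕ) :
    patternOfTableau E G T (r + 1) i =
      patternOfTableau E G T r i + #{j ∈ Ico (E i) (G i) | T (i, j) = r + 1} := by
  rw [patternOfTableau, patternOfTableau, add_assoc, ← card_union_of_disjoint, ← filter_or]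
  · exact congrArg (E i + #·) (filter_congr fun j _ => by omega)
  · exact disjoint_filter.2 fun _ _ h1 h2 => by omega

lemma ncard_cells_eq_sum (hn : ∀ i, n ≤ i → G i = 0) (T : ℕ × ℕ → ℕ) (r : ℕ) :
    ({p : ℕ × ℕ | E p.1 ≤ p.2 ∧ p.2 < G p.1 ∧ T p = r + 1}.ncard : ℤ) =
      ∑ i ∈ range n, ((patternOfTableau E G T (r + 1) i : ℤ) - patternOfTableau E G T r i) := by
  have hcells : {p : ℕ × ℕ | E p.1 ≤ p.2 ∧ p.2 < G p.1 ∧ T p = r + 1} =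
      ↑((range n).biUnion fun i => {j ∈ Ico (E i) (G i) | T (i, j) = r + 1}.map
        ⟨fun j => (i, j), Prod.mk_right_injective i⟩) := by
    ext ⟨i, j⟩
    simp only [Set.mem_ofPred_eq, coe_biUnion, mem_coe, mem_range, mem_map, mem_filter, mem_Ico,
      Function.Embedding.coeFn_mk, Prod.mk.injEq, Set.mem_iUnion]
    constructor
    · rintro ⟨hEj, hjG, hT⟩
      exact ⟨i, not_le.1 fun h => by rw [hn i h] at hjG; omega, j, ⟨⟨hEj, hjG⟩, hT⟩, rfl, rfl⟩
    · rintro ⟨i, -, j, h, rfl, rfl⟩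
      exact ⟨h.1.1, h.1.2, h.2⟩
  rw [hcells, Set.ncard_coe_finset, card_biUnion]
  · push_cast
    refine sum_congr rfl fun i _ => ?_
    rw [card_map, patternOfTableau_succ]
    push_cast
    ring
  · intro i _ i' _ hii'
    simp only [Function.onFun, disjoint_left, mem_map]
    rintro _ ⟨j, -, rfl⟩ ⟨j', -, h⟩
    exact hii' (congrArg Prod.fst h).symm

namespace IsSkewSSYT

lemma row_mono_s4 (hT : IsSkewSSYT E G l M T) (hEj : E i ≤ j) (hjj' : j ≤ j') (hj'G : j' < G i) :
    T (i, j) ≤ T (i, j') := by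
  have : MonotoneOn (fun j => T (i, j)) (Set.Ico (E i) (G i)) :=
    monotoneOn_of_le_add_one Set.ordConnected_Ico fun j _ hj hj1 =>
      hT.2.2.2.1 i j hj.1 hj1.2
  exact this ⟨hEj, by omega⟩ ⟨by omega, hj'G⟩ hjj'

lemma patternOfTableau_le_iff (hT : IsSkewSSYT E G l M T) (hEj : E i ≤ j) (hjG : j < G i) :
    patternOfTableau E G T r i ≤ j ↔ r < T (i, j) := by
  rw [patternOfTableau, ← not_lt, lt_add_card_filter_Ico_iff _ hEj hjG, not_le]
  exact fun y z hy hyz hz h => (hT.row_mono_s4 hy hyz hz).trans h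

lemma patternOfTableau_zero (hT : IsSkewSSYT E G l M T) : patternOfTableau E G T 0 = E := by
  funext i
  rw [patternOfTableau, filter_false_of_mem fun j hj => ?_, card_empty, add_zero]
  have := (hT.2.1 i j (mem_Ico.1 hj).1 (mem_Ico.1 hj).2).1
  omega

lemma patternOfTableau_last (hT : IsSkewSSYT E G l M T) : patternOfTableau E G T l = G := by
  funext i
  rw [patternOfTableau, filter_true_of_mem fun j hj =>
    (hT.2.1 i j (mem_Ico.1 hj).1 (mem_Ico.1 hj).2).2, Nat.card_Ico]
  have := hT.1 i
  omega

lemma isGTPattern (hE : IsYoung E) (hG : IsYoung G) (hn : ∀ i, n ≤ i → G i = 0)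
    (hT : IsSkewSSYT E G l M T) : IsGTPattern l n E G M (patternOfTableau E G T) where
  strip r _ i := by
    refine ⟨patternOfTableau_mono E G T r.le_succ i, ?_⟩
    -- Box `(i, j)` just right of the entries `≤ r` of row `i` holds an entry `> r`, so the box
    -- below it holds an entry `> r + 1`.
    set j := patternOfTableau E G T r i
    have hEij : E i ≤ j := Nat.le_add_right _ _
    rcases le_or_gt (G (i + 1)) j with hj | hj
    · exact (patternOfTableau_le (hT.1 _) T _).trans hj
    · have hjG : j < G i := hj.trans_le (hG i)
      have hTij := (hT.patternOfTableau_le_iff hEij hjG).1 le_rfl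
      have hcol := hT.2.2.2.2.1 i j hEij hjG ((hE i).trans hEij) hj
      exact (hT.patternOfTableau_le_iff ((hE i).trans hEij) hj).2 (by omega)
  zero := hT.patternOfTableau_zero
  last := hT.patternOfTableau_last
  sum_sub r := by rw [← ncard_cells_eq_sum hn, hT.2.2.2.2.2 r]

lemma tableauOfPattern_patternOfTableau (hT : IsSkewSSYT E G l M T) :
    tableauOfPattern E G l (patternOfTableau E G T) = T := by
  funext ⟨i, j⟩
  rw [tableauOfPattern]
  split_ifs with h
  · rw [filter_congr fun r _ => hT.patternOfTableau_le_iff h.1 h.2, range_eq_Ico,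
      Ico_filter_lt, Nat.card_Ico, min_eq_right (hT.2.1 i j h.1 h.2).2, Nat.sub_zero]
  · exact (hT.2.2.1 i j h).symm

end IsSkewSSYT

lemma IsGTPattern.isSkewSSYT (hc : IsGTPattern l n E G M c) (hn : ∀ i, n ≤ i → G i = 0) :
    IsSkewSSYT E G l M (tableauOfPattern E G l c) := by
  refine ⟨fun i => hc.zero_le le_rfl i |>.trans (hc.le_last le_rfl i), fun i j hEj hjG => ⟨?_, ?_⟩,
    fun i j h => if_neg h, fun i j hEj hjG => ?_, fun i j hEj hjG hEj' hjG' => ?_, fun r => ?_⟩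
  · exact (hc.le_iff_lt_tableauOfPattern hEj hjG (Nat.zero_le l)).1 (by rwa [hc.zero])
  · rw [tableauOfPattern, if_pos ⟨hEj, hjG⟩]
    exact (card_filter_le _ _).trans (card_range l).le
  · simp only [tableauOfPattern]
    rw [if_pos ⟨hEj, by omega⟩, if_pos ⟨by omega, hjG⟩]
    exact card_le_card (monotone_filter_right _ fun _ _ h => h.trans j.le_succ)
  · -- With `m = T (i, j)`: `c m (i + 1) ≤ c (m - 1) i ≤ j`, so `(i + 1, j)` is not yet in `c m`.
    set m := tableauOfPattern E G l c (i, j)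
    have hm : 0 < m := (hc.le_iff_lt_tableauOfPattern hEj hjG (Nat.zero_le l)).1 (by rwa [hc.zero])
    have hml : m ≤ l := by
      rw [show m = _ from if_pos ⟨hEj, hjG⟩]
      exact (card_filter_le _ _).trans (card_range l).le
    have hprev : c (m - 1) i ≤ j :=
      (hc.le_iff_lt_tableauOfPattern hEj hjG (by omega)).2 (by omega)
    have hstrip := (hc.strip (m - 1) (by omega) i).2
    rw [Nat.sub_add_cancel hm] at hstrip
    exact (hc.le_iff_lt_tableauOfPattern hEj' hjG' hml).1 (hstrip.trans hprev)
  · have := ncard_cells_eq_sum (E := E) hn (tableauOfPattern E G l c) r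
    rw [hc.patternOfTableau_tableauOfPattern r.isLt, hc.patternOfTableau_tableauOfPattern r.isLt.le,
      hc.sum_sub r] at this
    exact_mod_cast this

lemma tableauOfPattern_congr (h : ∀ r < l, c' r = c r) :
    tableauOfPattern E G l c' = tableauOfPattern E G l c := by
  funext p
  simp only [tableauOfPattern]
  rw [filter_congr fun r hr => by rw [h r (mem_range.1 hr)]]

end GTPattern

/-- `upperRow k f r` and `lowerRow k f r` are the rows `f_r` and `f_{-r}` of `f`, 0-indexed and
padded with zeros. -/
def upperRow (k : ℕ) (f : GammaAmb → ℕ) (r i : ℕ) : ℕ :=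
  if i < k + r then f (.inl (r, i + 1)) else 0

def lowerRow (k : ℕ) (f : GammaAmb → ℕ) (r i : ℕ) : ℕ :=
  if i < k then f (.inl (-r, i + 1)) else 0

lemma sum_range_ite_lt {m n : ℕ} (hmn : m ≤ n) (g : ℕ → ℤ) :
    ∑ i ∈ range n, (if i < m then g (i + 1) else 0) = ∑ a ∈ Icc 1 m, g a := by
  rw [← sum_filter, range_eq_Ico, Ico_filter_lt, min_eq_right hmn, sum_Ico_add' g 0 m 1, zero_add,
    Ico_add_one_right_eq_Icc]

section Omega

variable {k l : ℕ} {f : GammaAmb → ℕ}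

lemma mem_Omega_iff : f ∈ Omega k l ↔
    (∀ a b, gammaStep k l a b → f (.inl b) ≤ f (.inl a)) ∧ ∀ p ∉ gammaTildeSet k l, f p = 0 := by
  change (∀ a b, tildeGE k l a b → f b ≤ f a) ∧ _ ↔ _
  refine ⟨fun ⟨hmono, hvan⟩ =>
    ⟨fun a b hab => hmono _ _ (.inl ⟨a, b, rfl, rfl, .single hab⟩), hvan⟩,
    fun ⟨hstep, hvan⟩ => ⟨?_, hvan⟩⟩
  rintro _ _ (⟨a, b, rfl, rfl, hab⟩ | rfl)
  · induction hab with
    | refl => exact le_rfl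
    | tail _ hbc ih => exact (hstep _ _ hbc).trans ih
  · exact le_rfl

lemma forall_gammaStep_iff : (∀ a b, gammaStep k l a b → f (.inl b) ≤ f (.inl a)) ↔
    (∀ r < l, IsHorizontalStrip (upperRow k f r) (upperRow k f (r + 1))) ∧
      ∀ r < l, IsHorizontalStrip (lowerRow k f r) (lowerRow k f (r + 1)) := by
  simp only [IsHorizontalStrip, upperRow, lowerRow, Nat.cast_add, Nat.cast_one, neg_add']
  constructor
  · intro h
    refine ⟨fun r hr i => ⟨?_, ?_⟩, fun r hr i => ⟨?_, ?_⟩⟩ <;> split_ifs <;>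
      first | exact Nat.zero_le _ | omega | skip
    · exact h _ _ (.inl ⟨r, i + 1, hr, by omega, by omega, rfl, rfl⟩)
    · exact h _ _ (.inr (.inl ⟨r, i + 1, hr, by omega, by omega, rfl, rfl⟩))
    · exact h _ _ (.inr (.inr (.inl ⟨r, i + 1, hr, by omega, by omega, rfl, rfl⟩)))
    · exact h _ _ (.inr (.inr (.inr ⟨r, i + 1, hr, by omega, by omega, rfl, rfl⟩)))
  · rintro ⟨hU, hL⟩ a b (⟨r, j, hr, hj, hjk, rfl, rfl⟩ | ⟨r, j, hr, hj, hjk, rfl, rfl⟩ |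
      ⟨r, j, hr, hj, hjk, rfl, rfl⟩ | ⟨r, j, hr, hj, hjk, rfl, rfl⟩) <;>
      obtain ⟨i, rfl⟩ : ∃ i, j = i + 1 := ⟨j - 1, by omega⟩
    · have := (hU r hr i).1
      rwa [if_pos (by omega), if_pos (by omega)] at this
    · have := (hU r hr i).2
      rwa [if_pos (by omega), if_pos (by omega)] at this
    · have := (hL r hr i).1
      rwa [if_pos (by omega), if_pos (by omega)] at this
    · have := (hL r hr i).2
      rwa [if_pos (by omega), if_pos (by omega)] at this

lemma upperRow_eq_iff {G : ℕ →₀ ℕ} {r : ℕ} (hG : ∀ i, k + r ≤ i → G i = 0) :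
    upperRow k f r = ⇑G ↔ ∀ a, 1 ≤ a → a ≤ k + r → f (.inl (r, a)) = G (a - 1) := by
  refine ⟨fun h a ha hak => ?_, fun h => funext fun i => ?_⟩
  · obtain ⟨i, rfl⟩ : ∃ i, a = i + 1 := ⟨a - 1, by omega⟩
    simpa [upperRow, show i < k + r by omega] using congrFun h i
  · unfold upperRow
    split_ifs with hi
    · simpa using h (i + 1) (by omega) (by omega)
    · exact (hG i (by omega)).symm

lemma lowerRow_eq_iff {G : ℕ →₀ ℕ} {r : ℕ} (hG : ∀ i, k ≤ i → G i = 0) :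
    lowerRow k f r = ⇑G ↔ ∀ a, 1 ≤ a → a ≤ k → f (.inl (-r, a)) = G (a - 1) := by
  refine ⟨fun h a ha hak => ?_, fun h => funext fun i => ?_⟩
  · obtain ⟨i, rfl⟩ : ∃ i, a = i + 1 := ⟨a - 1, by omega⟩
    simpa [lowerRow, show i < k by omega] using congrFun h i
  · unfold lowerRow
    split_ifs with hi
    · simpa using h (i + 1) (by omega) (by omega)
    · exact (hG i (by omega)).symm

lemma Afun_succ (f : GammaAmb → ℕ) {n r : ℕ} (hn : k + (r + 1) ≤ n) :
    Afun k f (r + 1) = ∑ i ∈ range n, ((upperRow k f (r + 1) i : ℤ) - upperRow k f r i) := by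
  rw [Afun, show k + (r + 1) - 1 = k + r by omega, ← sum_range_ite_lt hn,
    ← sum_range_ite_lt (show k + r ≤ n by omega), ← sum_sub_distrib]
  simp only [upperRow, fval, Nat.cast_ite, Nat.cast_zero, Nat.cast_succ, add_sub_cancel_right]

lemma Bfun_succ (f : GammaAmb → ℕ) {n : ℕ} (hn : k ≤ n) (r : ℕ) :
    Bfun k f (r + 1) = ∑ i ∈ range n, ((lowerRow k f (r + 1) i : ℤ) - lowerRow k f r i) := by
  rw [Bfun, sum_sub_distrib, ← sum_range_ite_lt hn, ← sum_range_ite_lt hn, ← sum_sub_distrib]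
  simp only [lowerRow, fval, Nat.cast_ite, Nat.cast_zero, Nat.cast_succ, neg_add,
    neg_add_cancel_right]

def omegaFiber (k l : ℕ) (E D F : ℕ →₀ ℕ) (A B : Fin l → ℕ) (C : ℕ × ℕ → ℕ) :
    Set (GammaAmb → ℕ) :=
  {f ∈ Omega k l |
    (∀ a : ℕ, 1 ≤ a → a ≤ k → f (Sum.inl (-(l : ℤ), a)) = D (a - 1)) ∧
    (∀ a : ℕ, 1 ≤ a → a ≤ k → f (Sum.inl ((0 : ℤ), a)) = E (a - 1)) ∧
    (∀ a : ℕ, 1 ≤ a → a ≤ k + l → f (Sum.inl ((l : ℤ), a)) = F (a - 1)) ∧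
    (∀ j : Fin l, Afun k f ((j : ℕ) + 1) = (A j : ℤ)) ∧
    (∀ j : Fin l, Bfun k f ((j : ℕ) + 1) = (B j : ℤ)) ∧
    (∀ p : ℕ × ℕ, f (Sum.inr p) = C p)}

lemma mem_omegaFiber_iff {E D F : ℕ →₀ ℕ} {A B : Fin l → ℕ} {C : ℕ × ℕ → ℕ}
    (hrE : ∀ i, k ≤ i → E i = 0) (hrD : ∀ i, k ≤ i → D i = 0) (hrF : ∀ i, k + l ≤ i → F i = 0) :
    f ∈ omegaFiber k l E D F A B C ↔
      IsGTPattern l (k + l) E F A (upperRow k f) ∧ IsGTPattern l (k + l) E D B (lowerRow k f) ∧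
        (∀ p ∉ gammaTildeSet k l, f p = 0) ∧ ∀ p, f (.inr p) = C p := by
  have hU₀ := upperRow_eq_iff (f := f) (r := 0) (by simpa using hrE)
  have hL₀ := lowerRow_eq_iff (f := f) (r := 0) hrE
  simp only [Nat.cast_zero, neg_zero, add_zero] at hU₀ hL₀
  have hA (j : Fin l) := Afun_succ (k := k) f (n := k + l) (r := j) (by omega)
  have hB (j : Fin l) := Bfun_succ (k := k) f (n := k + l) (by omega) j
  simp only [omegaFiber, Set.mem_ofPred_eq, mem_Omega_iff, forall_gammaStep_iff, hA, hB,
    ← upperRow_eq_iff hrF, ← lowerRow_eq_iff hrD, ← hU₀]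
  constructor
  · rintro ⟨⟨⟨hU, hL⟩, hvan⟩, hD, hE, hF, hA, hB, hC⟩
    exact ⟨⟨hU, hE, hF, hA⟩, ⟨hL, hL₀.2 (hU₀.1 hE), hD, hB⟩, hvan, hC⟩
  · rintro ⟨⟨hU, hE, hF, hA⟩, ⟨hL, -, hD, hB⟩, hvan, hC⟩
    exact ⟨⟨⟨hU, hL⟩, hvan⟩, hD, hE, hF, hA, hB, hC⟩

end Omega

/-- The function on `Γ̃(k,ℓ)` with rows `f_r = cU r`, `f_{-r} = cL r` (`r ≥ 1`) and
`f(ε_{s,t}) = C (s, t)`. -/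
def ofRows (k l : ℕ) (C : ℕ × ℕ → ℕ) (cU cL : ℕ → ℕ → ℕ) : GammaAmb → ℕ
  | .inl (i, j) =>
    if (i, j) ∈ gammaSet k l then
      if 0 ≤ i then cU i.toNat (j - 1) else cL (-i).toNat (j - 1)
    else 0
  | .inr p => C p

section OfRows

variable {k l : ℕ} {C : ℕ × ℕ → ℕ} {cU cL : ℕ → ℕ → ℕ}

lemma ofRows_inl_natCast {r a : ℕ} (hr : r ≤ l) (ha : a < k + r) :
    ofRows k l C cU cL (.inl (r, a + 1)) = cU r a := by
  simp [ofRows, gammaSet, hr]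
  omega

lemma ofRows_inl_neg_natCast {r a : ℕ} (hr : r ≤ l) (hr₀ : 0 < r) (ha : a < k) :
    ofRows k l C cU cL (.inl (-r, a + 1)) = cL r a := by
  simp [ofRows, gammaSet, hr, ha, hr₀.ne']

lemma ofRows_congr {cU' cL' : ℕ → ℕ → ℕ} (hU : ∀ r ≤ l, cU' r = cU r) (hL : ∀ r ≤ l, cL' r = cL r) :
    ofRows k l C cU' cL' = ofRows k l C cU cL := by
  funext p
  rcases p with ⟨i, j⟩ | p
  · simp only [ofRows]
    split_ifs with h hi
    · rw [hU _ (by simp [gammaSet] at h; omega)]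
    · rw [hL _ (by simp [gammaSet] at h; omega)]
    · rfl
  · rfl

lemma ofRows_eq_zero (hC : ∀ p ∉ epsSet l, C p = 0) (p : GammaAmb) (hp : p ∉ gammaTildeSet k l) :
    ofRows k l C cU cL p = 0 := by
  rcases p with ⟨i, j⟩ | p <;> simp_all [ofRows, gammaTildeSet]

lemma ofRows_upperRow_lowerRow {f : GammaAmb → ℕ} (hf : ∀ p ∉ gammaTildeSet k l, f p = 0)
    (hC : ∀ p, f (.inr p) = C p) : ofRows k l C (upperRow k f) (lowerRow k f) = f := by
  funext p
  rcases p with ⟨i, j⟩ | p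
  · by_cases h : (i, j) ∈ gammaSet k l
    · obtain ⟨h₁, h₂, h₃, h₄⟩ := h
      simp only [ofRows, if_pos (show (i, j) ∈ gammaSet k l from ⟨h₁, h₂, h₃, h₄⟩)]
      split_ifs with hi
      · lift i to ℕ using hi
        simp [upperRow, show j - 1 < k + i by omega, Nat.sub_add_cancel h₃]
      · obtain ⟨r, rfl⟩ : ∃ r : ℕ, i = -r := ⟨(-i).toNat, by omega⟩
        simp [lowerRow, show j - 1 < k by omega, Nat.sub_add_cancel h₃]
    · simp only [ofRows, if_neg h]
      exact (hf _ (by simpa [gammaTildeSet] using h)).symm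
  · exact (hC p).symm

variable {n n' : ℕ} {E G D : ℕ →₀ ℕ} {M M' : Fin l → ℕ}

lemma IsGTPattern.upperRow_ofRows (hc : IsGTPattern l n E G M cU) (hE : ∀ i, k ≤ i → E i = 0)
    {r : ℕ} (hr : r ≤ l) : upperRow k (ofRows k l C cU cL) r = cU r := by
  funext i
  unfold upperRow
  split_ifs with hi
  · exact ofRows_inl_natCast hr hi
  · exact (hc.eq_zero_of_add_le hE hr (not_lt.1 hi)).symm

lemma IsGTPattern.lowerRow_ofRows (hcU : IsGTPattern l n E G M cU)
    (hcL : IsGTPattern l n' E D M' cL) (hD : ∀ i, k ≤ i → D i = 0) {r : ℕ} (hr : r ≤ l) :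
    lowerRow k (ofRows k l C cU cL) r = cL r := by
  funext i
  unfold lowerRow
  split_ifs with hi
  · rcases Nat.eq_zero_or_pos r with rfl | hr₀
    · simpa [hcU.zero, hcL.zero] using
        ofRows_inl_natCast (C := C) (cU := cU) (cL := cL) (Nat.zero_le l) (show i < k + 0 by omega)
    · exact ofRows_inl_neg_natCast hr hr₀ hi
  · have := (hcL.le_last hr i).trans_eq (hD i (not_lt.1 hi))
    omega

end OfRows

section Fiber

variable {k l : ℕ} {E D F : ℕ →₀ ℕ} {A B : Fin l → ℕ} {C : ℕ × ℕ → ℕ}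

lemma ofRows_mem_omegaFiber (hE : IsYoung E) (hD : IsYoung D) (hF : IsYoung F)
    (hrE : ∀ i, k ≤ i → E i = 0) (hrD : ∀ i, k ≤ i → D i = 0) (hrF : ∀ i, k + l ≤ i → F i = 0)
    (hC : ∀ p ∉ epsSet l, C p = 0) {T₁ T₂ : ℕ × ℕ → ℕ} (hT₁ : IsSkewSSYT E F l A T₁)
    (hT₂ : IsSkewSSYT E D l B T₂) :
    ofRows k l C (patternOfTableau E F T₁) (patternOfTableau E D T₂) ∈
      omegaFiber k l E D F A B C := by
  have hP₁ := hT₁.isGTPattern hE hF hrF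
  have hP₂ := hT₂.isGTPattern (n := k + l) hE hD fun i hi => hrD i (by omega)
  exact (mem_omegaFiber_iff hrE hrD hrF).2 ⟨hP₁.congr fun r hr => hP₁.upperRow_ofRows hrE hr,
    hP₂.congr fun r hr => hP₁.lowerRow_ofRows hP₂ hrD hr, ofRows_eq_zero hC, fun _ => rfl⟩

def omegaFiberEquiv (hE : IsYoung E) (hD : IsYoung D) (hF : IsYoung F)
    (hrE : ∀ i, k ≤ i → E i = 0) (hrD : ∀ i, k ≤ i → D i = 0) (hrF : ∀ i, k + l ≤ i → F i = 0)
    (hC : ∀ p ∉ epsSet l, C p = 0) :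
    omegaFiber k l E D F A B C ≃ {T // IsSkewSSYT E F l A T} × {T // IsSkewSSYT E D l B T} where
  toFun f :=
    have hf := (mem_omegaFiber_iff hrE hrD hrF).1 f.2
    (⟨_, hf.1.isSkewSSYT hrF⟩, ⟨_, hf.2.1.isSkewSSYT fun i hi => hrD i (by omega)⟩)
  invFun T := ⟨_, ofRows_mem_omegaFiber hE hD hF hrE hrD hrF hC T.1.2 T.2.2⟩
  left_inv f := by
    obtain ⟨hU, hL, hvan, hfC⟩ := (mem_omegaFiber_iff hrE hrD hrF).1 f.2
    ext1
    dsimp only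
    rw [ofRows_congr (fun r hr => hU.patternOfTableau_tableauOfPattern hr)
      (fun r hr => hL.patternOfTableau_tableauOfPattern hr)]
    exact ofRows_upperRow_lowerRow hvan hfC
  right_inv T := by
    have hP₁ := T.1.2.isGTPattern hE hF hrF
    have hP₂ := T.2.2.isGTPattern (n := k + l) hE hD fun i hi => hrD i (by omega)
    refine Prod.ext (Subtype.ext ?_) (Subtype.ext ?_) <;> dsimp only
    · rw [tableauOfPattern_congr fun r hr => hP₁.upperRow_ofRows hrE hr.le,
        T.1.2.tableauOfPattern_patternOfTableau]
    · rw [tableauOfPattern_congr fun r hr => hP₁.lowerRow_ofRows hP₂ hrD hr.le,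
        T.2.2.tableauOfPattern_patternOfTableau]

end Fiber

theorem statement_4_general (k l : ℕ)
    (E D F : ℕ →₀ ℕ) (hE : IsYoung E) (hD : IsYoung D) (hF : IsYoung F)
    (hrE : ∀ i, k ≤ i → E i = 0) (hrD : ∀ i, k ≤ i → D i = 0)
    (hrF : ∀ i, k + l ≤ i → F i = 0)
    (A B : Fin l → ℕ) (C : ℕ × ℕ → ℕ) (hC : ∀ p, p ∉ epsSet l → C p = 0) :
    Set.ncard {f ∈ Omega k l |
      (∀ a : ℕ, 1 ≤ a → a ≤ k → f (Sum.inl (-(l : ℤ), a)) = D (a - 1)) ∧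
      (∀ a : ℕ, 1 ≤ a → a ≤ k → f (Sum.inl ((0 : ℤ), a)) = E (a - 1)) ∧
      (∀ a : ℕ, 1 ≤ a → a ≤ k + l → f (Sum.inl ((l : ℤ), a)) = F (a - 1)) ∧
      (∀ j : Fin l, Afun k f ((j : ℕ) + 1) = (A j : ℤ)) ∧
      (∀ j : Fin l, Bfun k f ((j : ℕ) + 1) = (B j : ℤ)) ∧
      (∀ p : ℕ × ℕ, f (Sum.inr p) = C p)} =
    kostka E F l A * kostka E D l B := by
  rw [kostka, kostka, ← Nat.card_coe_set_eq, ← Nat.card_coe_set_eq, ← Nat.card_coe_set_eq,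
    ← Nat.card_prod]
  exact Nat.card_congr (omegaFiberEquiv hE hD hF hrE hrD hrF hC)

theorem statement_4 (k l : ℕ) (hk : 0 < k) (hl : 0 < l)
    (E D F : ℕ →₀ ℕ) (hE : IsYoung E) (hD : IsYoung D) (hF : IsYoung F)
    (hrE : ∀ i, k ≤ i → E i = 0) (hrD : ∀ i, k ≤ i → D i = 0)
    (hrF : ∀ i, k + l ≤ i → F i = 0)
    (A B : Fin l → ℕ) (C : ℕ × ℕ → ℕ) (hC : ∀ p, p ∉ epsSet l → C p = 0) :
    Set.ncard {f ∈ Omega k l |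
      (∀ a : ℕ, 1 ≤ a → a ≤ k → f (Sum.inl (-(l : ℤ), a)) = D (a - 1)) ∧
      (∀ a : ℕ, 1 ≤ a → a ≤ k → f (Sum.inl ((0 : ℤ), a)) = E (a - 1)) ∧
      (∀ a : ℕ, 1 ≤ a → a ≤ k + l → f (Sum.inl ((l : ℤ), a)) = F (a - 1)) ∧
      (∀ j : Fin l, Afun k f ((j : ℕ) + 1) = (A j : ℤ)) ∧
      (∀ j : Fin l, Bfun k f ((j : ℕ) + 1) = (B j : ℤ)) ∧
      (∀ p : ℕ × ℕ, f (Sum.inr p) = C p)} =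
    kostka E F l A * kostka E D l B :=
  statement_4_general k l E D F hE hD hF hrE hrD hrF A B C hC

end Pieri
end
end

section
/- Let k and ℓ be positive integers. Every increasing subset of Γ(k,ℓ) is of the form A_{(c,I,J)} for some 0 ≤ c ≤ k and subsets I, J ⊆ {1,…,ℓ} with |I| ≤ k − c. Consequently, every increasing subset of Γ̃(k,ℓ) is of the form A_{(c,I,J)} ∪ Z for some such c, I, J and some Z ⊆ F_ℓ. -/
open MvPolynomial TensorProduct
open scoped Classical

noncomputable section

namespace Pieri

/-!
Each row of an increasing subset `A ⊆ Γ(k,ℓ)` is an initial segment `γ_1^(i), …, γ_{a_i}^(i)`: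
inside a row `γ_j^(i) ≥ γ_{j+1}^(i)` through a zigzag via an adjacent row. The two relations
between adjacent rows force every step `a_i → a_{i±1}` away from row `0` to be `0` or `1`, so
the row lengths are recorded by `c = a_0` and the sets `I`, `J` of positions where they jump;
then `|I| = a_{-ℓ} - c ≤ k - c`. The points `ε_{s,t}` of `Γ̃(k,ℓ)` are isolated, so they
contribute an arbitrary subset `Z`.
-/

section Counting

open Finset

def jumps (f : ℕ → ℕ) (L : ℕ) : Finset ℕ :=
  (Icc 1 L).filter fun s => f s = f (s - 1) + 1

theorem jumps_subset {f : ℕ → ℕ} {L : ℕ} : jumps f L ⊆ Icc 1 L :=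
  filter_subset _ _

theorem eq_add_card_jumps_inter {f : ℕ → ℕ} {L : ℕ}
    (hf : ∀ n < L, f n ≤ f (n + 1) ∧ f (n + 1) ≤ f n + 1) {n : ℕ} (hn : n ≤ L) :
    f n = f 0 + #(jumps f L ∩ Icc 1 n) := by
  induction n with
  | zero => simp
  | succ n ih =>
    have hmem : n + 1 ∈ jumps f L ↔ f (n + 1) = f n + 1 := by
      simp only [jumps, mem_filter, mem_Icc, Nat.add_sub_cancel]
      omega
    have hstep := hf n (by omega)
    have ih := ih (by omega)
    rw [← insert_Icc_right_eq_Icc_add_one (by omega)]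
    by_cases h : n + 1 ∈ jumps f L
    · rw [inter_insert_of_mem h, card_insert_of_notMem (by simp)]
      have := hmem.1 h
      omega
    · rw [inter_insert_of_notMem h]
      have := mt hmem.2 h
      omega

theorem eq_add_card_jumps {f : ℕ → ℕ} {L : ℕ}
    (hf : ∀ n < L, f n ≤ f (n + 1) ∧ f (n + 1) ≤ f n + 1) :
    f L = f 0 + #(jumps f L) := by
  have h := eq_add_card_jumps_inter hf le_rfl
  rwa [inter_eq_left.2 jumps_subset] at h

theorem eq_Icc_one_card {S : Finset ℕ} (h0 : 0 ∉ S)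
    (hS : ∀ j ∈ S, ∀ j', 1 ≤ j' → j' ≤ j → j' ∈ S) : S = Icc 1 #S := by
  have hsub : S ⊆ Icc 1 #S := fun x hx => by
    have hx0 : x ≠ 0 := fun h => h0 (h ▸ hx)
    have hle := card_le_card fun y (hy : y ∈ Icc 1 x) => hS x hx y (mem_Icc.1 hy).1 (mem_Icc.1 hy).2
    simp only [Nat.card_Icc, Nat.add_sub_cancel] at hle
    exact mem_Icc.2 ⟨by omega, hle⟩
  exact eq_of_subset_of_card_le hsub (by simp)

end Counting

theorem aSeq_eq {l : ℕ} {a : ℤ → ℕ}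
    (hup : ∀ n < l, a n ≤ a ↑(n + 1) ∧ a ↑(n + 1) ≤ a n + 1)
    (hdown : ∀ n < l, a (-n) ≤ a (-↑(n + 1)) ∧ a (-↑(n + 1)) ≤ a (-n) + 1)
    {i : ℤ} (hi₁ : -(l : ℤ) ≤ i) (hi₂ : i ≤ l) :
    aSeq (a 0) (jumps (fun n => a (-n)) l) (jumps (fun n => a n) l) i = a i := by
  rcases le_or_gt 0 i with h | h
  · obtain ⟨m, rfl⟩ : ∃ m : ℕ, i = m := ⟨i.toNat, by omega⟩
    rw [aSeq, if_pos h, Int.toNat_natCast]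
    exact (eq_add_card_jumps_inter (f := fun n => a n) hup (by omega)).symm
  · obtain ⟨m, rfl⟩ : ∃ m : ℕ, i = -m := ⟨(-i).toNat, by omega⟩
    rw [aSeq, if_neg (by omega), neg_neg, Int.toNat_natCast]
    simpa using (eq_add_card_jumps_inter (f := fun n => a (-n)) hdown (by omega)).symm

section Gamma

variable {k l : ℕ}

theorem mem_gammaSet {i : ℤ} {j : ℕ} :
    (i, j) ∈ gammaSet k l ↔ -(l : ℤ) ≤ i ∧ i ≤ l ∧ 1 ≤ j ∧ (j : ℤ) ≤ k + max 0 i :=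
  Iff.rfl

theorem gammaGE_of_steps {a b c : ℤ × ℕ} (hab : gammaStep k l a b) (hbc : gammaStep k l b c) :
    gammaGE k l a c :=
  .head hab (.single hbc)

theorem gammaGE_row_succ (hl : 0 < l) {i : ℤ} {j : ℕ} (hj : 1 ≤ j)
    (h : (i, j + 1) ∈ gammaSet k l) : gammaGE k l (i, j) (i, j + 1) := by
  rw [mem_gammaSet] at h
  -- zigzag through the adjacent row farther from `0`, or the nearer one in the rows `±ℓ`
  rcases le_or_gt 0 i with hi | hi
  · obtain ⟨m, rfl⟩ : ∃ m : ℕ, i = m := ⟨i.toNat, by omega⟩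
    by_cases hm : m < l
    · exact gammaGE_of_steps (b := ((m : ℤ) + 1, j + 1))
        (Or.inr (Or.inl ⟨m, j, hm, hj, by omega, rfl, rfl⟩))
        (Or.inl ⟨m, j + 1, hm, by omega, by omega, rfl, rfl⟩)
    · obtain ⟨p, rfl⟩ : ∃ p, m = p + 1 := ⟨m - 1, by omega⟩
      exact gammaGE_of_steps (b := ((p : ℤ), j))
        (Or.inl ⟨p, j, by omega, hj, by omega, by simp, rfl⟩)
        (Or.inr (Or.inl ⟨p, j, by omega, hj, by omega, rfl, by simp⟩))
  · obtain ⟨m, rfl⟩ : ∃ m : ℕ, i = -m := ⟨(-i).toNat, by omega⟩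
    by_cases hm : m < l
    · exact gammaGE_of_steps (b := (-(m : ℤ) - 1, j + 1))
        (Or.inr (Or.inr (Or.inr ⟨m, j, hm, hj, by omega, rfl, rfl⟩)))
        (Or.inr (Or.inr (Or.inl ⟨m, j + 1, hm, by omega, by omega, rfl, rfl⟩)))
    · obtain ⟨p, rfl⟩ : ∃ p, m = p + 1 := ⟨m - 1, by omega⟩
      have hrow (j' : ℕ) : (-((p + 1 : ℕ) : ℤ), j') = (-(p : ℤ) - 1, j') :=
        Prod.ext (by push_cast; ring) rfl
      exact gammaGE_of_steps (b := (-(p : ℤ), j))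
        (Or.inr (Or.inr (Or.inl ⟨p, j, by omega, hj, by omega, hrow j, rfl⟩)))
        (Or.inr (Or.inr (Or.inr ⟨p, j, by omega, hj, by omega, rfl, hrow (j + 1)⟩)))

theorem gammaGE_row_of_le (hl : 0 < l) {i : ℤ} {j j' : ℕ} (hj' : 1 ≤ j') (hjj : j' ≤ j)
    (h : (i, j) ∈ gammaSet k l) : gammaGE k l (i, j') (i, j) := by
  induction j, hjj using Nat.le_induction with
  | base => exact .refl
  | succ n hn ih =>
    rw [mem_gammaSet] at h
    exact (ih (by rw [mem_gammaSet]; omega)).trans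
      (gammaGE_row_succ hl (by omega) (by rw [mem_gammaSet]; omega))

def rowLen (k l : ℕ) (A : Set (ℤ × ℕ)) (i : ℤ) : ℕ :=
  ((Finset.Icc 1 (k + l)).filter fun j => (i, j) ∈ A).card

namespace IsIncreasingG

variable {A : Set (ℤ × ℕ)}

theorem mem_of_gammaStep (hA : IsIncreasingG k l A) {a x : ℤ × ℕ} (ha : a ∈ A)
    (hx : x ∈ gammaSet k l) (h : gammaStep k l x a) : x ∈ A :=
  hA.2 a ha x hx (.single h)

theorem bounds_of_mem (hA : IsIncreasingG k l A) {i : ℤ} {j : ℕ} (h : (i, j) ∈ A) :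
    -(l : ℤ) ≤ i ∧ i ≤ l ∧ 1 ≤ j ∧ (j : ℤ) ≤ k + max 0 i :=
  hA.1 h

theorem mem_iff_le_rowLen (hl : 0 < l) (hA : IsIncreasingG k l A) {i : ℤ} {j : ℕ}
    (hj : 1 ≤ j) : (i, j) ∈ A ↔ j ≤ rowLen k l A i := by
  set S := (Finset.Icc 1 (k + l)).filter fun j => (i, j) ∈ A
  have hS : ∀ j, j ∈ S ↔ (i, j) ∈ A := fun j => by
    simp only [S, Finset.mem_filter, Finset.mem_Icc, and_iff_right_iff_imp]
    intro h
    have := hA.bounds_of_mem h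
    omega
  have hSeq : S = Finset.Icc 1 S.card := by
    refine eq_Icc_one_card (fun h0 => by have := hA.bounds_of_mem ((hS 0).1 h0); omega) ?_
    intro j hj j' hj' hjj
    rw [hS] at hj ⊢
    exact hA.2 _ hj _ (by have := hA.bounds_of_mem hj; rw [mem_gammaSet]; omega)
      (gammaGE_row_of_le hl hj' hjj (hA.1 hj))
  rw [← hS, hSeq, Finset.mem_Icc]
  exact and_iff_right hj

theorem rowLen_le_of_nonpos (hl : 0 < l) (hA : IsIncreasingG k l A) {i : ℤ} (hi : i ≤ 0) :
    rowLen k l A i ≤ k := by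
  rcases Nat.eq_zero_or_pos (rowLen k l A i) with h | h
  · omega
  · have := hA.bounds_of_mem ((hA.mem_iff_le_rowLen hl h).2 le_rfl)
    omega

theorem rowLen_le_of_forall_mem (hl : 0 < l) (hA : IsIncreasingG k l A) {r r' : ℤ}
    (h : ∀ j, 1 ≤ j → (r, j) ∈ A → (r', j) ∈ A) : rowLen k l A r ≤ rowLen k l A r' := by
  rcases Nat.eq_zero_or_pos (rowLen k l A r) with h0 | h0
  · omega
  · exact (hA.mem_iff_le_rowLen hl h0).1 (h _ h0 ((hA.mem_iff_le_rowLen hl h0).2 le_rfl))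

theorem rowLen_le_succ_of_forall_mem (hl : 0 < l) (hA : IsIncreasingG k l A) {r r' : ℤ}
    (h : ∀ j, 1 ≤ j → (r', j + 1) ∈ A → (r, j) ∈ A) :
    rowLen k l A r' ≤ rowLen k l A r + 1 := by
  by_contra! hlt
  have hmem : (r', rowLen k l A r + 2) ∈ A := (hA.mem_iff_le_rowLen hl (by omega)).2 hlt
  have := (hA.mem_iff_le_rowLen hl (by omega)).1 (h _ (by omega) hmem)
  omega

theorem rowLen_up_step (hl : 0 < l) (hA : IsIncreasingG k l A) {m : ℕ} (hm : m < l) :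
    rowLen k l A m ≤ rowLen k l A ↑(m + 1) ∧ rowLen k l A ↑(m + 1) ≤ rowLen k l A m + 1 := by
  push_cast
  constructor
  · refine hA.rowLen_le_of_forall_mem hl fun j hj h => ?_
    have := hA.bounds_of_mem h
    exact hA.mem_of_gammaStep h (by rw [mem_gammaSet]; omega)
      (Or.inl ⟨m, j, hm, hj, by omega, rfl, rfl⟩)
  · refine hA.rowLen_le_succ_of_forall_mem hl fun j hj h => ?_
    have := hA.bounds_of_mem h
    exact hA.mem_of_gammaStep h (by rw [mem_gammaSet]; omega)
      (Or.inr (Or.inl ⟨m, j, hm, hj, by omega, rfl, rfl⟩))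

theorem rowLen_down_step (hl : 0 < l) (hA : IsIncreasingG k l A) {m : ℕ} (hm : m < l) :
    rowLen k l A (-m) ≤ rowLen k l A (-↑(m + 1)) ∧
      rowLen k l A (-↑(m + 1)) ≤ rowLen k l A (-m) + 1 := by
  rw [Nat.cast_succ, neg_add']
  constructor
  · refine hA.rowLen_le_of_forall_mem hl fun j hj h => ?_
    have := hA.bounds_of_mem h
    exact hA.mem_of_gammaStep h (by rw [mem_gammaSet]; omega)
      (Or.inr (Or.inr (Or.inl ⟨m, j, hm, hj, by omega, rfl, rfl⟩)))
  · refine hA.rowLen_le_succ_of_forall_mem hl fun j hj h => ?_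
    have := hA.bounds_of_mem h
    exact hA.mem_of_gammaStep h (by rw [mem_gammaSet]; omega)
      (Or.inr (Or.inr (Or.inr ⟨m, j, hm, hj, by omega, rfl, rfl⟩)))

theorem exists_eq_Acij (hl : 0 < l) (hA : IsIncreasingG k l A) :
    ∃ (c : ℕ) (I J : Finset ℕ), c ≤ k ∧ I ⊆ Finset.Icc 1 l ∧ J ⊆ Finset.Icc 1 l ∧
      I.card ≤ k - c ∧ A = Acij l c I J := by
  have hup := fun m => hA.rowLen_up_step hl (m := m)
  have hdown := fun m => hA.rowLen_down_step hl (m := m)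
  have hI := eq_add_card_jumps (f := fun n => rowLen k l A (-n)) hdown
  have hk := hA.rowLen_le_of_nonpos hl (i := -l) (by omega)
  simp only [CharP.cast_eq_zero, neg_zero] at hI
  refine ⟨rowLen k l A 0, jumps (fun n => rowLen k l A (-n)) l, jumps (fun n => rowLen k l A n) l,
    by omega, jumps_subset, jumps_subset, by omega, ?_⟩
  ext ⟨i, j⟩
  simp only [Acij, Set.mem_ofPred_eq]
  constructor
  · intro h
    obtain ⟨hi₁, hi₂, hj, -⟩ := hA.bounds_of_mem h
    exact ⟨hi₁, hi₂, hj, aSeq_eq hup hdown hi₁ hi₂ ▸ (hA.mem_iff_le_rowLen hl hj).1 h⟩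
  · rintro ⟨hi₁, hi₂, hj, h⟩
    exact (hA.mem_iff_le_rowLen hl hj).2 (aSeq_eq hup hdown hi₁ hi₂ ▸ h)

end IsIncreasingG

namespace IsIncreasingT

variable {B : Set GammaAmb}

theorem isIncreasingG_preimage_inl (hB : IsIncreasingT k l B) :
    IsIncreasingG k l (Sum.inl ⁻¹' B) := by
  refine ⟨fun p hp => ?_, fun p hp x hx hge => ?_⟩
  · simpa [gammaTildeSet] using hB.1 hp
  · exact hB.2 _ hp _ (Or.inl ⟨x, hx, rfl⟩) (Or.inl ⟨x, p, rfl, rfl, hge⟩)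

theorem preimage_inr_subset_epsSet (hB : IsIncreasingT k l B) : Sum.inr ⁻¹' B ⊆ epsSet l :=
  fun p hp => by simpa [gammaTildeSet] using hB.1 hp

end IsIncreasingT

end Gamma

theorem statement_5_general (k l : ℕ) (hl : 0 < l) :
    (∀ A : Set (ℤ × ℕ), IsIncreasingG k l A →
      ∃ (c : ℕ) (I J : Finset ℕ), c ≤ k ∧ I ⊆ Finset.Icc 1 l ∧ J ⊆ Finset.Icc 1 l ∧
        I.card ≤ k - c ∧ A = Acij l c I J) ∧
    (∀ B : Set GammaAmb, IsIncreasingT k l B →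
      ∃ (c : ℕ) (I J : Finset ℕ) (Z : Set (ℕ × ℕ)), c ≤ k ∧ I ⊆ Finset.Icc 1 l ∧
        J ⊆ Finset.Icc 1 l ∧ I.card ≤ k - c ∧ Z ⊆ epsSet l ∧
        B = Sum.inl '' Acij l c I J ∪ Sum.inr '' Z) := by
  refine ⟨fun A hA => hA.exists_eq_Acij hl, fun B hB => ?_⟩
  obtain ⟨c, I, J, hc, hI, hJ, hcard, hA⟩ := hB.isIncreasingG_preimage_inl.exists_eq_Acij hl
  refine ⟨c, I, J, Sum.inr ⁻¹' B, hc, hI, hJ, hcard, hB.preimage_inr_subset_epsSet, ?_⟩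
  rw [← hA, Set.image_preimage_inl_union_image_preimage_inr]

theorem statement_5 (k l : ℕ) (hk : 0 < k) (hl : 0 < l) :
    (∀ A : Set (ℤ × ℕ), IsIncreasingG k l A →
      ∃ (c : ℕ) (I J : Finset ℕ), c ≤ k ∧ I ⊆ Finset.Icc 1 l ∧ J ⊆ Finset.Icc 1 l ∧
        I.card ≤ k - c ∧ A = Acij l c I J) ∧
    (∀ B : Set GammaAmb, IsIncreasingT k l B →
      ∃ (c : ℕ) (I J : Finset ℕ) (Z : Set (ℕ × ℕ)), c ≤ k ∧ I ⊆ Finset.Icc 1 l ∧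
        J ⊆ Finset.Icc 1 l ∧ I.card ≤ k - c ∧ Z ⊆ epsSet l ∧
        B = Sum.inl '' Acij l c I J ∪ Sum.inr '' Z) :=
  statement_5_general k l hl

end Pieri
end
end
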